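/- arXiv:2202.08403 — 6 statements merged into one kernel-verified Lean document; each statement's English description precedes it below -/
import Mathlib

section
/- Let p ≥ 1 be a natural number and let F : ℝ → ℝ be p times continuously differentiable with F, F', …, F^{(p)} all bounded on ℝ. Then there exists a constant C, depending only on p and on the sup-norms of F, F', …, F^{(p)}, such that for every Schwartz function φ : ℝ → ℝ one has (φ, F·φ')_p ≤ C ‖φ‖_p². (Part (1) of the paper's Lemma on weighted integration-by-parts estimates.) -/
open MeasureTheory
open Finset

set_option maxHeartbeats 1000000

lemma integrable_of_decay {h : ℝ → ℝ} (hc : Continuous h) {C : ℝ}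
    (hb : ∀ x, |h x| ≤ C / (1 + x ^ 2)) : Integrable h := by
  apply (integrable_inv_one_add_sq.const_mul C).mono' hc.aestronglyMeasurable
  filter_upwards with x
  rw [Real.norm_eq_abs]
  calc |h x| ≤ C / (1+x^2) := hb x
    _ = C * (1+x^2)⁻¹ := by ring

lemma schwartz_decay (φ : SchwartzMap ℝ ℝ) (m i : ℕ) :
    ∃ C, 0 ≤ C ∧ ∀ x : ℝ, (1 + x ^ 2) ^ m * |iteratedDeriv i (⇑φ) x| ≤ C := by
  obtain ⟨C0, hC0p, hC0⟩ := φ.decay 0 i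
  obtain ⟨C1, hC1p, hC1⟩ := φ.decay (2 * m) i
  refine ⟨2 ^ m * (C0 + C1), by positivity, fun x => ?_⟩
  have h0 : |iteratedDeriv i (⇑φ) x| ≤ C0 := by
    simpa [norm_iteratedFDeriv_eq_norm_iteratedDeriv, Real.norm_eq_abs] using hC0 x
  have h1 : |x| ^ (2 * m) * |iteratedDeriv i (⇑φ) x| ≤ C1 := by
    simpa [norm_iteratedFDeriv_eq_norm_iteratedDeriv, Real.norm_eq_abs] using hC1 x
  have hpow : (1 + x ^ 2) ^ m ≤ 2 ^ m * (1 + |x| ^ (2 * m)) := by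
    rcases le_total (x ^ 2) 1 with hx | hx
    · have : (1 + x ^ 2) ^ m ≤ 2 ^ m := by
        apply pow_le_pow_left₀ (by positivity); linarith
      have : (0:ℝ) ≤ |x| ^ (2*m) := by positivity
      nlinarith [pow_pos (show (0:ℝ) < 2 by norm_num) m]
    · have h2 : (1 + x ^ 2) ^ m ≤ (2 * x ^ 2) ^ m := by
        apply pow_le_pow_left₀ (by positivity); linarith
      have h3 : (2 * x ^ 2 : ℝ) ^ m = 2 ^ m * |x| ^ (2 * m) := by
        rw [mul_pow, pow_mul, sq_abs]
      rw [h3] at h2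
      have : (0:ℝ) < 2 ^ m := by positivity
      nlinarith
  calc (1 + x ^ 2) ^ m * |iteratedDeriv i (⇑φ) x|
      ≤ (2 ^ m * (1 + |x| ^ (2 * m))) * |iteratedDeriv i (⇑φ) x| := by
        apply mul_le_mul_of_nonneg_right hpow (abs_nonneg _)
    _ = 2 ^ m * (|iteratedDeriv i (⇑φ) x| + |x| ^ (2*m) * |iteratedDeriv i (⇑φ) x|) := by ring
    _ ≤ 2 ^ m * (C0 + C1) := by
        apply mul_le_mul_of_nonneg_left _ (by positivity)
        linarith

lemma integrable_aux (φ : SchwartzMap ℝ ℝ) (i j m : ℕ) {b : ℝ → ℝ} (hb : Continuous b)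
    {Mb : ℝ} (hMb : ∀ x, |b x| ≤ Mb * (1 + x ^ 2) ^ m) :
    Integrable (fun x => b x * (iteratedDeriv i (⇑φ) x * iteratedDeriv j (⇑φ) x)) := by
  obtain ⟨C1, hC1p, hC1⟩ := schwartz_decay φ (m + 1) i
  obtain ⟨C2, hC2p, hC2⟩ := schwartz_decay φ 0 j
  have hMbp : 0 ≤ Mb := by
    have := (abs_nonneg (b 0)).trans (hMb 0)
    simpa using this
  have hgi : Continuous (iteratedDeriv i (⇑φ)) := (φ.smooth ⊤).continuous_iteratedDeriv i (by exact_mod_cast le_top)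
  have hgj : Continuous (iteratedDeriv j (⇑φ)) := (φ.smooth ⊤).continuous_iteratedDeriv j (by exact_mod_cast le_top)
  apply integrable_of_decay (hb.mul (hgi.mul hgj)) (C := Mb * C1 * C2)
  intro x
  have hx : (0:ℝ) < 1 + x ^ 2 := by positivity
  show |b x * (iteratedDeriv i (⇑φ) x * iteratedDeriv j (⇑φ) x)| ≤ Mb * C1 * C2 / (1 + x ^ 2)
  rw [le_div_iff₀ hx]
  have key : |b x * (iteratedDeriv i (⇑φ) x * iteratedDeriv j (⇑φ) x)| * (1 + x ^ 2)
      = |b x| * (((1 + x ^ 2) * |iteratedDeriv i (⇑φ) x|) * |iteratedDeriv j (⇑φ) x|) := by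
    rw [abs_mul, abs_mul]; ring
  rw [key]
  calc |b x| * (((1 + x ^ 2) * |iteratedDeriv i (⇑φ) x|) * |iteratedDeriv j (⇑φ) x|)
      ≤ (Mb * (1 + x ^ 2) ^ m) * (((1 + x ^ 2) * |iteratedDeriv i (⇑φ) x|) * |iteratedDeriv j (⇑φ) x|) := by
        apply mul_le_mul_of_nonneg_right (hMb x) (by positivity)
    _ = Mb * (((1 + x ^ 2) ^ (m + 1) * |iteratedDeriv i (⇑φ) x|) * |iteratedDeriv j (⇑φ) x|) := by
        ring
    _ ≤ Mb * (C1 * C2) := by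
        apply mul_le_mul_of_nonneg_left _ hMbp
        apply mul_le_mul (hC1 x) (by simpa using hC2 x) (abs_nonneg _) hC1p
    _ = Mb * C1 * C2 := by ring

lemma choose_sum_step (k : ℕ) (A B : ℕ → ℝ) :
    ∑ j ∈ range (k + 1), (k.choose j : ℝ) * (A (j+1) * B (k-j) + A j * B (k-j+1))
      = ∑ j ∈ range (k + 2), ((k+1).choose j : ℝ) * A j * B (k+1-j) := by
  have hsplit : ∑ j ∈ range (k + 1), (k.choose j : ℝ) * (A (j+1) * B (k-j) + A j * B (k-j+1))
      = (∑ j ∈ range (k + 1), (k.choose j : ℝ) * A (j+1) * B (k-j))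
        + ∑ j ∈ range (k + 1), (k.choose j : ℝ) * A j * B (k-j+1) := by
    rw [← Finset.sum_add_distrib]; apply Finset.sum_congr rfl; intros; ring
  rw [hsplit]
  rw [Finset.sum_range_succ' (fun j => ((k+1).choose j : ℝ) * A j * B (k+1-j)) (k+1)]
  have hrw : ∀ j ∈ range (k + 1), ((k+1).choose (j+1) : ℝ) * A (j+1) * B (k+1-(j+1))
      = (k.choose j : ℝ) * A (j+1) * B (k-j) + (k.choose (j+1) : ℝ) * A (j+1) * B (k-j) := by
    intro j hj
    have h1 : (k+1) - (j+1) = k - j := by omega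
    rw [h1, Nat.choose_succ_succ]
    push_cast; ring
  rw [Finset.sum_congr rfl hrw, Finset.sum_add_distrib]
  have h2 : ∑ j ∈ range (k + 1), (k.choose j : ℝ) * A j * B (k-j+1)
      = (∑ j ∈ range k, (k.choose (j+1) : ℝ) * A (j+1) * B (k-j)) + A 0 * B (k+1) := by
    rw [Finset.sum_range_succ' (fun j => (k.choose j : ℝ) * A j * B (k-j+1)) k]
    congr 1
    · apply Finset.sum_congr rfl; intro j hj
      have : k - (j+1) + 1 = k - j := by
        have := Finset.mem_range.mp hj; omega
      rw [this]
    · simp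
  have h3 : ∑ j ∈ range (k + 1), (k.choose (j+1) : ℝ) * A (j+1) * B (k-j)
      = ∑ j ∈ range k, (k.choose (j+1) : ℝ) * A (j+1) * B (k-j) := by
    rw [Finset.sum_range_succ]
    simp [Nat.choose_succ_self]
  rw [h2, h3]
  simp only [Nat.choose_zero_right, Nat.cast_one, Nat.sub_zero, one_mul]
  ring

lemma leibniz_iteratedDeriv {f g : ℝ → ℝ} {p : ℕ} (hf : ContDiff ℝ (p : ℕ∞) f)
    (hg : ContDiff ℝ (⊤ : ℕ∞) g) {k : ℕ} (hk : k ≤ p) (x : ℝ) :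
    iteratedDeriv k (fun y => f y * g y) x
      = ∑ j ∈ range (k + 1),
          (k.choose j : ℝ) * iteratedDeriv j f x * iteratedDeriv (k - j) g x := by
  induction k generalizing x with
  | zero => simp [iteratedDeriv_zero]
  | succ k ih =>
    have hk' : k ≤ p := by omega
    have heq : iteratedDeriv k (fun y => f y * g y)
        = fun y => ∑ j ∈ range (k + 1),
            (k.choose j : ℝ) * iteratedDeriv j f y * iteratedDeriv (k - j) g y :=
      funext (fun y => ih hk' y)
    rw [iteratedDeriv_succ, heq]
    have hder : HasDerivAt (fun y => ∑ j ∈ range (k + 1),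
          (k.choose j : ℝ) * iteratedDeriv j f y * iteratedDeriv (k - j) g y)
        (∑ j ∈ range (k + 1), (k.choose j : ℝ) *
          (iteratedDeriv (j+1) f x * iteratedDeriv (k-j) g x
            + iteratedDeriv j f x * iteratedDeriv (k-j+1) g x)) x := by
      apply HasDerivAt.fun_sum
      intro j hj
      have hjk : j < p := by
        have := Finset.mem_range.mp hj; omega
      have hfj : HasDerivAt (iteratedDeriv j f) (iteratedDeriv (j+1) f x) x := by
        rw [iteratedDeriv_succ]
        exact (hf.differentiable_iteratedDeriv j (by exact_mod_cast hjk) x).hasDerivAt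
      have hgj : HasDerivAt (iteratedDeriv (k-j) g) (iteratedDeriv (k-j+1) g x) x := by
        rw [iteratedDeriv_succ]
        have hgd : Differentiable ℝ (iteratedDeriv (k-j) g) :=
          ContDiff.differentiable_iteratedDeriv' _ (hg.of_le (ENat.natCast_le_of_coe_top_le_withTop le_rfl _))
        exact (hgd x).hasDerivAt
      have := ((hfj.const_mul ((k.choose j : ℝ))).fun_mul hgj)
      exact this.congr_deriv (by ring)
    rw [hder.deriv]
    have := choose_sum_step k (fun j => iteratedDeriv j f x) (fun j => iteratedDeriv j g x)
    rw [this]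

lemma ibp_bound (p : ℕ) (hp : 1 ≤ p) (F : ℝ → ℝ) (hF : ContDiff ℝ (p : ℕ∞) F)
    {M0 M1 : ℝ} (h0 : ∀ x, |F x| ≤ M0) (h1 : ∀ x, |deriv F x| ≤ M1)
    (φ : SchwartzMap ℝ ℝ) (k : ℕ) :
    ∫ x : ℝ, (1 + x ^ 2) ^ (2 * p) *
        (F x * (iteratedDeriv k (⇑φ) x * iteratedDeriv (k + 1) (⇑φ) x))
      ≤ (2 * p * M0 + M1) / 2 * ∫ x : ℝ, (1 + x ^ 2) ^ (2 * p) * iteratedDeriv k (⇑φ) x ^ 2 := by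
  have hM0 : 0 ≤ M0 := le_trans (abs_nonneg _) (h0 0)
  have hM1 : 0 ≤ M1 := le_trans (abs_nonneg _) (h1 0)
  set n := 2 * p with hn
  have hn1 : 1 ≤ n := by omega
  set g : ℝ → ℝ := iteratedDeriv k (⇑φ) with hgdef
  set g' : ℝ → ℝ := iteratedDeriv (k + 1) (⇑φ) with hg'def
  have hFc : Continuous F := hF.continuous
  have hF'c : Continuous (deriv F) := hF.continuous_deriv (by exact_mod_cast hp)
  have hWc : Continuous (fun x : ℝ => (1 + x ^ 2) ^ n) := (continuous_const.add (continuous_pow 2)).pow n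
  have hW'c : Continuous (fun x : ℝ => (n : ℝ) * (1 + x ^ 2) ^ (n - 1) * (2 * x)) := (continuous_const.mul ((continuous_const.add (continuous_pow 2)).pow (n-1))).mul (continuous_const.mul continuous_id)
  have hgd : ∀ x, HasDerivAt g (g' x) x := by
    intro x
    have hdiff : Differentiable ℝ g :=
      ContDiff.differentiable_iteratedDeriv' _
        ((φ.smooth ⊤).of_le (ENat.natCast_le_of_coe_top_le_withTop le_rfl _))
    have h := (hdiff x).hasDerivAt
    have : deriv g x = g' x := by rw [hgdef, hg'def, iteratedDeriv_succ]
    rwa [this] at h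
  set H : ℝ → ℝ := fun x => 1 / 2 * ((1 + x ^ 2) ^ n * F x * g x ^ 2) with hHdef
  set u : ℝ → ℝ := fun x => 1 / 2 * ((((n : ℝ) * (1 + x ^ 2) ^ (n - 1) * (2 * x)) * F x
      + (1 + x ^ 2) ^ n * deriv F x) * g x ^ 2) with hudef
  set v : ℝ → ℝ := fun x => (1 + x ^ 2) ^ n * (F x * (g x * g' x)) with hvdef
  have hH : ∀ x, HasDerivAt H (u x + v x) x := by
    intro x
    have hWd : HasDerivAt (fun y : ℝ => (1 + y ^ 2) ^ n)
        ((n : ℝ) * (1 + x ^ 2) ^ (n - 1) * (2 * x)) x := by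
      have h2 : HasDerivAt (fun y : ℝ => 1 + y ^ 2) (2 * x) x := by
        simpa using (hasDerivAt_pow 2 x).const_add 1
      exact h2.pow n
    have hFd : HasDerivAt F (deriv F x) x :=
      (hF.differentiable (by exact_mod_cast (show p ≠ 0 by omega)) x).hasDerivAt
    have h := (((hWd.fun_mul hFd).fun_mul ((hgd x).fun_pow 2)).const_mul (1 / 2 : ℝ))
    exact h.congr_deriv (by simp only [hudef, hvdef]; ring)
  have h2x : ∀ x : ℝ, |2 * x| ≤ 1 + x ^ 2 := by
    intro x
    rw [abs_le]
    constructor <;> nlinarith [sq_nonneg (x - 1), sq_nonneg (x + 1)]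
  have hW' : ∀ x : ℝ, |(n : ℝ) * (1 + x ^ 2) ^ (n - 1) * (2 * x)| ≤ (n : ℝ) * (1 + x ^ 2) ^ n := by
    intro x
    have hpos : (0:ℝ) ≤ (n : ℝ) * (1 + x ^ 2) ^ (n - 1) := by positivity
    rw [abs_mul, abs_of_nonneg hpos]
    calc (n : ℝ) * (1 + x ^ 2) ^ (n - 1) * |2 * x|
        ≤ (n : ℝ) * (1 + x ^ 2) ^ (n - 1) * (1 + x ^ 2) :=
          mul_le_mul_of_nonneg_left (h2x x) hpos
      _ = (n : ℝ) * ((1 + x ^ 2) ^ (n - 1) * (1 + x ^ 2) ^ 1) := by ring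
      _ = (n : ℝ) * (1 + x ^ 2) ^ n := by rw [← pow_add]; congr 2; omega
  have hHint : Integrable H := by
    have hb : Continuous (fun x : ℝ => 1 / 2 * ((1 + x ^ 2) ^ n * F x)) :=
      continuous_const.mul (hWc.mul hFc)
    have hbd : ∀ x : ℝ, |1 / 2 * ((1 + x ^ 2) ^ n * F x)| ≤ M0 / 2 * (1 + x ^ 2) ^ n := by
      intro x
      have hWp : (0:ℝ) ≤ (1 + x ^ 2) ^ n := by positivity
      rw [abs_mul, abs_mul, abs_of_nonneg hWp]
      have := mul_le_mul_of_nonneg_left (h0 x) hWp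
      rw [abs_of_nonneg (by norm_num : (0:ℝ) ≤ 1/2)]
      nlinarith
    exact (integrable_aux φ k k n hb hbd).congr
      (Filter.Eventually.of_forall fun x => by simp only [hHdef]; ring)
  have huint : Integrable u := by
    have hb : Continuous (fun x : ℝ => 1 / 2 * (((n : ℝ) * (1 + x ^ 2) ^ (n - 1) * (2 * x)) * F x
        + (1 + x ^ 2) ^ n * deriv F x)) := continuous_const.mul ((hW'c.mul hFc).add (hWc.mul hF'c))
    have hbd : ∀ x : ℝ, |1 / 2 * (((n : ℝ) * (1 + x ^ 2) ^ (n - 1) * (2 * x)) * F x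
        + (1 + x ^ 2) ^ n * deriv F x)| ≤ ((n : ℝ) * M0 + M1) / 2 * (1 + x ^ 2) ^ n := by
      intro x
      have hWp : (0:ℝ) ≤ (1 + x ^ 2) ^ n := by positivity
      have hA : |((n : ℝ) * (1 + x ^ 2) ^ (n - 1) * (2 * x)) * F x|
          ≤ (n : ℝ) * (1 + x ^ 2) ^ n * M0 := by
        rw [abs_mul]
        exact mul_le_mul (hW' x) (h0 x) (abs_nonneg _) (by positivity)
      have hB : |(1 + x ^ 2) ^ n * deriv F x| ≤ (1 + x ^ 2) ^ n * M1 := by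
        rw [abs_mul, abs_of_nonneg hWp]
        exact mul_le_mul_of_nonneg_left (h1 x) hWp
      calc |1 / 2 * (((n : ℝ) * (1 + x ^ 2) ^ (n - 1) * (2 * x)) * F x
          + (1 + x ^ 2) ^ n * deriv F x)|
          ≤ 1 / 2 * (|((n : ℝ) * (1 + x ^ 2) ^ (n - 1) * (2 * x)) * F x|
            + |(1 + x ^ 2) ^ n * deriv F x|) := by
            rw [abs_mul, abs_of_nonneg (by norm_num : (0:ℝ) ≤ 1/2)]
            exact mul_le_mul_of_nonneg_left (abs_add_le _ _) (by norm_num)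
        _ ≤ 1 / 2 * ((n : ℝ) * (1 + x ^ 2) ^ n * M0 + (1 + x ^ 2) ^ n * M1) := by
            apply mul_le_mul_of_nonneg_left _ (by norm_num)
            linarith
        _ = ((n : ℝ) * M0 + M1) / 2 * (1 + x ^ 2) ^ n := by ring
    exact (integrable_aux φ k k n hb hbd).congr
      (Filter.Eventually.of_forall fun x => by simp only [hudef]; ring)
  have hvint : Integrable v := by
    have hb : Continuous (fun x : ℝ => (1 + x ^ 2) ^ n * F x) := hWc.mul hFc
    have hbd : ∀ x : ℝ, |(1 + x ^ 2) ^ n * F x| ≤ M0 * (1 + x ^ 2) ^ n := by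
      intro x
      have hWp : (0:ℝ) ≤ (1 + x ^ 2) ^ n := by positivity
      rw [abs_mul, abs_of_nonneg hWp]
      nlinarith [mul_le_mul_of_nonneg_left (h0 x) hWp]
    exact (integrable_aux φ k (k + 1) n hb hbd).congr
      (Filter.Eventually.of_forall fun x => by simp only [hvdef]; ring)
  have hWg2 : Integrable (fun x : ℝ => (1 + x ^ 2) ^ n * g x ^ 2) := by
    have hb : Continuous (fun x : ℝ => (1 + x ^ 2) ^ n) := hWc
    have hbd : ∀ x : ℝ, |(1 + x ^ 2) ^ n| ≤ 1 * (1 + x ^ 2) ^ n := by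
      intro x
      rw [abs_of_nonneg (by positivity), one_mul]
    exact (integrable_aux φ k k n hb hbd).congr
      (Filter.Eventually.of_forall fun x => by simp only [hgdef]; ring)
  have hzero : ∫ x, (u x + v x) = 0 :=
    integral_eq_zero_of_hasDerivAt_of_integrable hH (huint.add hvint) hHint
  have hsplit : ∫ x, (u x + v x) = (∫ x, u x) + ∫ x, v x := integral_add huint hvint
  have hptw : ∀ x, -u x ≤ ((n : ℝ) * M0 + M1) / 2 * ((1 + x ^ 2) ^ n * g x ^ 2) := by
    intro x
    have hWp : (0:ℝ) ≤ (1 + x ^ 2) ^ n := by positivity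
    refine le_trans (neg_le_abs _) ?_
    have hA : |((n : ℝ) * (1 + x ^ 2) ^ (n - 1) * (2 * x)) * F x|
        ≤ (n : ℝ) * (1 + x ^ 2) ^ n * M0 := by
      rw [abs_mul]
      exact mul_le_mul (hW' x) (h0 x) (abs_nonneg _) (by positivity)
    have hB : |(1 + x ^ 2) ^ n * deriv F x| ≤ (1 + x ^ 2) ^ n * M1 := by
      rw [abs_mul, abs_of_nonneg hWp]
      exact mul_le_mul_of_nonneg_left (h1 x) hWp
    calc |u x| = 1 / 2 * (|((n : ℝ) * (1 + x ^ 2) ^ (n - 1) * (2 * x)) * F x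
          + (1 + x ^ 2) ^ n * deriv F x| * g x ^ 2) := by
          simp only [hudef]
          rw [abs_mul, abs_mul, abs_of_nonneg (sq_nonneg (g x)),
            abs_of_nonneg (by norm_num : (0:ℝ) ≤ 1/2)]
      _ ≤ 1 / 2 * (((n : ℝ) * (1 + x ^ 2) ^ n * M0 + (1 + x ^ 2) ^ n * M1) * g x ^ 2) := by
          apply mul_le_mul_of_nonneg_left _ (by norm_num)
          apply mul_le_mul_of_nonneg_right _ (sq_nonneg _)
          exact le_trans (abs_add_le _ _) (by linarith)
      _ = ((n : ℝ) * M0 + M1) / 2 * ((1 + x ^ 2) ^ n * g x ^ 2) := by ring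
  have hgoal : ∫ x, v x ≤ ((n : ℝ) * M0 + M1) / 2 * ∫ x, (1 + x ^ 2) ^ n * g x ^ 2 := by
    have hveq : ∫ x, v x = ∫ x, -u x := by
      rw [integral_neg]; linarith
    rw [hveq]
    calc ∫ x, -u x ≤ ∫ x, ((n : ℝ) * M0 + M1) / 2 * ((1 + x ^ 2) ^ n * g x ^ 2) :=
          integral_mono huint.neg (hWg2.const_mul _) hptw
      _ = ((n : ℝ) * M0 + M1) / 2 * ∫ x, (1 + x ^ 2) ^ n * g x ^ 2 := integral_const_mul _ _
  have hcast : ((n : ℝ) * M0 + M1) / 2 = (2 * p * M0 + M1) / 2 := by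
    rw [hn]; push_cast; ring
  rw [← hcast]
  exact hgoal

lemma integrable_W_sq (φ : SchwartzMap ℝ ℝ) (m i : ℕ) :
    Integrable (fun x : ℝ => (1 + x ^ 2) ^ m * iteratedDeriv i (⇑φ) x ^ 2) := by
  have hb : Continuous (fun x : ℝ => (1 + x ^ 2) ^ m) := (continuous_const.add (continuous_pow 2)).pow m
  have hbd : ∀ x : ℝ, |(1 + x ^ 2) ^ m| ≤ 1 * (1 + x ^ 2) ^ m := fun x => by
    rw [abs_of_nonneg (by positivity), one_mul]
  exact (integrable_aux φ i i m hb hbd).congr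
    (Filter.Eventually.of_forall fun x => by ring)


/-- The weighted Hilbert norm
`‖φ‖_n := (Σ_{k=0}^{n} ∫_ℝ (1+x²)^{2n} (φ^{(k)}(x))² dx)^{1/2}`. -/
noncomputable def wNorm (n : ℕ) (φ : ℝ → ℝ) : ℝ :=
  Real.sqrt (∑ k ∈ Finset.range (n + 1),
    ∫ x : ℝ, (1 + x ^ 2) ^ (2 * n) * (iteratedDeriv k φ x) ^ 2)

/-- The weighted inner product
`(φ, ψ)_n := Σ_{k=0}^{n} ∫_ℝ (1+x²)^{2n} φ^{(k)}(x) ψ^{(k)}(x) dx`. -/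
noncomputable def wInner (n : ℕ) (φ ψ : ℝ → ℝ) : ℝ :=
  ∑ k ∈ Finset.range (n + 1),
    ∫ x : ℝ, (1 + x ^ 2) ^ (2 * n) * (iteratedDeriv k φ x * iteratedDeriv k ψ x)

/-- Part (1) of the paper's weighted integration-by-parts Lemma: if `F` is `p` times
continuously differentiable with `F, F', …, F^{(p)}` bounded, then there is a constant
`C` (depending only on `p` and those sup-norms) with `(φ, F·φ')_p ≤ C ‖φ‖_p²` for all
Schwartz `φ`. -/
theorem wInner_first_order_bound (p : ℕ) (hp : 1 ≤ p) (F : ℝ → ℝ)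
    (hF : ContDiff ℝ (p : ℕ∞) F)
    (hFb : ∀ k ≤ p, ∃ M : ℝ, ∀ x : ℝ, |iteratedDeriv k F x| ≤ M) :
    ∃ C : ℝ, ∀ φ : SchwartzMap ℝ ℝ,
      wInner p ⇑φ (fun x => F x * deriv (⇑φ) x) ≤ C * (wNorm p ⇑φ) ^ 2 := by
  have hex : ∀ j : ℕ, ∃ Mj : ℝ, j ≤ p → ∀ x, |iteratedDeriv j F x| ≤ Mj := by
    intro j
    by_cases hj : j ≤ p
    · obtain ⟨Mj, hMj⟩ := hFb j hj; exact ⟨Mj, fun _ => hMj⟩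
    · exact ⟨0, fun h => absurd h hj⟩
  choose M hM using hex
  have hMnn : ∀ j, j ≤ p → 0 ≤ M j := fun j hj => le_trans (abs_nonneg _) (hM j hj 0)
  have h0F : ∀ x, |F x| ≤ M 0 := by
    have := hM 0 (Nat.zero_le p); simpa [iteratedDeriv_zero] using this
  have h1F : ∀ x, |deriv F x| ≤ M 1 := by
    have := hM 1 hp; simpa [iteratedDeriv_one] using this
  set cb : ℕ → ℝ := fun j => if j = 0 then (2 * p * M 0 + M 1) / 2 else M j with hcb
  have hcbnn : ∀ j, j ≤ p → 0 ≤ cb j := by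
    intro j hj
    rw [hcb]
    by_cases hj0 : j = 0
    · simp only [hj0, if_pos rfl]
      have := hMnn 0 (Nat.zero_le p); have := hMnn 1 hp
      positivity
    · simp only [if_neg hj0]; exact hMnn j hj
  refine ⟨∑ k ∈ range (p + 1), ∑ j ∈ range (k + 1), (k.choose j : ℝ) * cb j, fun φ => ?_⟩
  have hdφ : ContDiff ℝ ((⊤ : ℕ∞) : WithTop ℕ∞) (deriv (⇑φ)) :=
    (contDiff_infty_iff_deriv.mp (φ.smooth ⊤)).2
  set A : ℕ → ℝ := fun i => ∫ x : ℝ, (1 + x ^ 2) ^ (2 * p) * iteratedDeriv i (⇑φ) x ^ 2 with hA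
  have hAnn : ∀ i, 0 ≤ A i := fun i => integral_nonneg fun x => by positivity
  set S := ∑ k ∈ range (p + 1), A k with hS
  have hSnn : 0 ≤ S := Finset.sum_nonneg fun i _ => hAnn i
  have hAS : ∀ i ∈ range (p + 1), A i ≤ S := fun i hi =>
    Finset.single_le_sum (fun j _ => hAnn j) hi
  have hwnorm : (wNorm p ⇑φ) ^ 2 = S := by
    rw [wNorm]; exact Real.sq_sqrt hSnn
  have hkey : ∀ k ∈ range (p + 1),
      (∫ x : ℝ, (1 + x ^ 2) ^ (2 * p) *
          (iteratedDeriv k (⇑φ) x * iteratedDeriv k (fun x => F x * deriv (⇑φ) x) x))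
        ≤ (∑ j ∈ range (k + 1), (k.choose j : ℝ) * cb j) * S := by
    intro k hk
    have hkp : k ≤ p := Nat.lt_succ_iff.mp (Finset.mem_range.mp hk)
    have hleib : ∀ x : ℝ, iteratedDeriv k (fun x => F x * deriv (⇑φ) x) x
        = ∑ j ∈ range (k + 1), (k.choose j : ℝ) * iteratedDeriv j F x
            * iteratedDeriv (k - j + 1) (⇑φ) x := by
      intro x
      rw [leibniz_iteratedDeriv hF hdφ hkp x]
      apply Finset.sum_congr rfl
      intro j hj
      rw [iteratedDeriv_succ']
    have hstep : (fun x : ℝ => (1 + x ^ 2) ^ (2 * p) *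
          (iteratedDeriv k (⇑φ) x * iteratedDeriv k (fun x => F x * deriv (⇑φ) x) x))
        = fun x => ∑ j ∈ range (k + 1), (k.choose j : ℝ) * ((1 + x ^ 2) ^ (2 * p) *
            (iteratedDeriv j F x *
              (iteratedDeriv k (⇑φ) x * iteratedDeriv (k - j + 1) (⇑φ) x))) := by
      funext x
      rw [hleib x, Finset.mul_sum, Finset.mul_sum]
      apply Finset.sum_congr rfl
      intros; ring
    have hterm_int : ∀ j ∈ range (k + 1),
        Integrable (fun x : ℝ => (k.choose j : ℝ) * ((1 + x ^ 2) ^ (2 * p) *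
          (iteratedDeriv j F x *
            (iteratedDeriv k (⇑φ) x * iteratedDeriv (k - j + 1) (⇑φ) x)))) := by
      intro j hj
      have hjp : j ≤ p := le_trans (Nat.lt_succ_iff.mp (mem_range.mp hj)) hkp
      have hFj : Continuous (iteratedDeriv j F) :=
        hF.continuous_iteratedDeriv j (by exact_mod_cast hjp)
      have hb : Continuous (fun x : ℝ =>
          (k.choose j : ℝ) * ((1 + x ^ 2) ^ (2 * p) * iteratedDeriv j F x)) :=
        continuous_const.mul (((continuous_const.add (continuous_pow 2)).pow (2*p) : Continuous
          (fun x : ℝ => (1 + x ^ 2) ^ (2 * p))).mul hFj)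
      have hbd : ∀ x : ℝ, |(k.choose j : ℝ) * ((1 + x ^ 2) ^ (2 * p) * iteratedDeriv j F x)|
          ≤ ((k.choose j : ℝ) * M j) * (1 + x ^ 2) ^ (2 * p) := by
        intro x
        have hWp : (0:ℝ) ≤ (1 + x ^ 2) ^ (2 * p) := by positivity
        rw [abs_mul, abs_mul, abs_of_nonneg hWp,
          abs_of_nonneg (by positivity : (0:ℝ) ≤ (k.choose j : ℝ))]
        have := mul_le_mul_of_nonneg_left (hM j hjp x) hWp
        nlinarith [Nat.cast_nonneg (α := ℝ) (k.choose j)]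
      exact (integrable_aux φ k (k - j + 1) (2 * p) hb hbd).congr
        (Filter.Eventually.of_forall fun x => by ring)
    rw [hstep, integral_finset_sum _ hterm_int]
    have hterm_bd : ∀ j ∈ range (k + 1),
        (∫ x : ℝ, (k.choose j : ℝ) * ((1 + x ^ 2) ^ (2 * p) *
          (iteratedDeriv j F x *
            (iteratedDeriv k (⇑φ) x * iteratedDeriv (k - j + 1) (⇑φ) x))))
          ≤ (k.choose j : ℝ) * cb j * S := by
      intro j hj
      have hjp : j ≤ p := le_trans (Nat.lt_succ_iff.mp (mem_range.mp hj)) hkp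
      rw [integral_const_mul, mul_assoc]
      apply mul_le_mul_of_nonneg_left _ (by positivity : (0:ℝ) ≤ (k.choose j : ℝ))
      by_cases hj0 : j = 0
      · subst hj0
        have hind : k - 0 + 1 = k + 1 := by omega
        have hmain := ibp_bound p hp F hF h0F h1F φ k
        calc (∫ x : ℝ, (1 + x ^ 2) ^ (2 * p) * (iteratedDeriv 0 F x *
              (iteratedDeriv k (⇑φ) x * iteratedDeriv (k - 0 + 1) (⇑φ) x)))
            ≤ (2 * p * M 0 + M 1) / 2 * A k := by
              rw [hind]
              simpa [iteratedDeriv_zero] using hmain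
          _ ≤ cb 0 * S := by
              rw [hcb]
              simp only [if_pos rfl]
              apply mul_le_mul_of_nonneg_left (hAS k hk)
              have := hMnn 0 (Nat.zero_le p); have := hMnn 1 hp
              positivity
      · set m := k - j + 1 with hm
        have hmp : m ≤ p := by omega
        have hmem : m ∈ range (p + 1) := Finset.mem_range.mpr (by omega)
        have hFj : Continuous (iteratedDeriv j F) :=
          hF.continuous_iteratedDeriv j (by exact_mod_cast hjp)
        have hint1 : Integrable (fun x : ℝ => (1 + x ^ 2) ^ (2 * p) *
            (iteratedDeriv j F x * (iteratedDeriv k (⇑φ) x * iteratedDeriv m (⇑φ) x))) := by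
          have hb : Continuous (fun x : ℝ => (1 + x ^ 2) ^ (2 * p) * iteratedDeriv j F x) :=
            ((continuous_const.add (continuous_pow 2)).pow (2*p)).mul hFj
          have hbd : ∀ x : ℝ, |(1 + x ^ 2) ^ (2 * p) * iteratedDeriv j F x|
              ≤ M j * (1 + x ^ 2) ^ (2 * p) := by
            intro x
            have hWp : (0:ℝ) ≤ (1 + x ^ 2) ^ (2 * p) := by positivity
            rw [abs_mul, abs_of_nonneg hWp]
            nlinarith [mul_le_mul_of_nonneg_left (hM j hjp x) hWp]
          exact (integrable_aux φ k m (2 * p) hb hbd).congr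
            (Filter.Eventually.of_forall fun x => by ring)
        have hint2 : Integrable (fun x : ℝ => M j / 2 *
            ((1 + x ^ 2) ^ (2 * p) * iteratedDeriv k (⇑φ) x ^ 2
              + (1 + x ^ 2) ^ (2 * p) * iteratedDeriv m (⇑φ) x ^ 2)) :=
          ((integrable_W_sq φ (2 * p) k).add (integrable_W_sq φ (2 * p) m)).const_mul _
        have hptw : ∀ x : ℝ, (1 + x ^ 2) ^ (2 * p) *
            (iteratedDeriv j F x * (iteratedDeriv k (⇑φ) x * iteratedDeriv m (⇑φ) x))
            ≤ M j / 2 * ((1 + x ^ 2) ^ (2 * p) * iteratedDeriv k (⇑φ) x ^ 2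
              + (1 + x ^ 2) ^ (2 * p) * iteratedDeriv m (⇑φ) x ^ 2) := by
          intro x
          have hWp : (0:ℝ) ≤ (1 + x ^ 2) ^ (2 * p) := by positivity
          set a := iteratedDeriv k (⇑φ) x
          set b := iteratedDeriv m (⇑φ) x
          have hab : |a * b| ≤ (a ^ 2 + b ^ 2) / 2 := by
            rw [abs_le]
            constructor <;> nlinarith [sq_nonneg (a - b), sq_nonneg (a + b)]
          have h3 : iteratedDeriv j F x * (a * b) ≤ M j * ((a ^ 2 + b ^ 2) / 2) := by
            calc iteratedDeriv j F x * (a * b) ≤ |iteratedDeriv j F x * (a * b)| :=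
                  le_abs_self _
              _ = |iteratedDeriv j F x| * |a * b| := abs_mul _ _
              _ ≤ M j * ((a ^ 2 + b ^ 2) / 2) :=
                  mul_le_mul (hM j hjp x) hab (abs_nonneg _) (hMnn j hjp)
          have h4 := mul_le_mul_of_nonneg_left h3 hWp
          nlinarith [h4]
        calc (∫ x : ℝ, (1 + x ^ 2) ^ (2 * p) *
              (iteratedDeriv j F x * (iteratedDeriv k (⇑φ) x * iteratedDeriv m (⇑φ) x)))
            ≤ ∫ x : ℝ, M j / 2 * ((1 + x ^ 2) ^ (2 * p) * iteratedDeriv k (⇑φ) x ^ 2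
                + (1 + x ^ 2) ^ (2 * p) * iteratedDeriv m (⇑φ) x ^ 2) :=
              integral_mono hint1 hint2 hptw
          _ = M j / 2 * (A k + A m) := by
              rw [integral_const_mul,
                integral_add (integrable_W_sq φ (2 * p) k) (integrable_W_sq φ (2 * p) m)]
          _ ≤ M j / 2 * (S + S) := by
              apply mul_le_mul_of_nonneg_left (add_le_add (hAS k hk) (hAS m hmem))
              exact div_nonneg (hMnn j hjp) (by norm_num)
          _ = M j * S := by ring
          _ = cb j * S := by rw [hcb]; simp [hj0]
    calc ∑ j ∈ range (k + 1), (∫ x : ℝ, (k.choose j : ℝ) * ((1 + x ^ 2) ^ (2 * p) *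
          (iteratedDeriv j F x *
            (iteratedDeriv k (⇑φ) x * iteratedDeriv (k - j + 1) (⇑φ) x))))
        ≤ ∑ j ∈ range (k + 1), (k.choose j : ℝ) * cb j * S := Finset.sum_le_sum hterm_bd
      _ = (∑ j ∈ range (k + 1), (k.choose j : ℝ) * cb j) * S := by rw [Finset.sum_mul]
  calc wInner p ⇑φ (fun x => F x * deriv (⇑φ) x)
      ≤ ∑ k ∈ range (p + 1), (∑ j ∈ range (k + 1), (k.choose j : ℝ) * cb j) * S := by
        rw [wInner]
        exact Finset.sum_le_sum hkey
    _ = (∑ k ∈ range (p + 1), ∑ j ∈ range (k + 1), (k.choose j : ℝ) * cb j) * S := by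
        rw [Finset.sum_mul]
    _ = (∑ k ∈ range (p + 1), ∑ j ∈ range (k + 1), (k.choose j : ℝ) * cb j)
          * (wNorm p ⇑φ) ^ 2 := by rw [hwnorm]
end

section
/- Let β, C₀, λ₋, λ₊ > 0, let a : ℝ → ℝ be continuously differentiable with λ₋ ≤ a(y) ≤ λ₊ for all y, and let f : ℝ → ℝ be continuous and satisfy 2 f(y) y ≤ −(β/2) y² + C₀ for all y ∈ ℝ. Define ρ(y) := a(y)^{-1} exp(∫_0^y f(s)/a(s) ds). Then there exist constants K, c > 0 such that ρ(y) ≤ K e^{−c y²} for all y ∈ ℝ; in particular ρ is Lebesgue integrable and ∫_ℝ |y|^k ρ(y) dy < ∞ for every k ∈ ℕ. (This Gaussian tail bound yields the paper's claim that the invariant measure π of the frozen fast process has finite moments of every order.) -/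
open MeasureTheory

set_option maxHeartbeats 1000000

/-- The (unnormalized) invariant density
`ρ(y) = a(y)⁻¹ exp(∫_0^y f(s)/a(s) ds)` of the one-dimensional diffusion with
generator `Lφ = f φ' + a φ''`. -/
noncomputable def invDensity (f a : ℝ → ℝ) (y : ℝ) : ℝ :=
  (a y)⁻¹ * Real.exp (∫ s in (0:ℝ)..y, f s / a s)

/-- Gaussian tail bound for the invariant density: under uniform ellipticity
`λ₋ ≤ a ≤ λ₊` and the dissipativity bound `2 f(y) y ≤ −(β/2) y² + C₀`, there are
`K, c > 0` with `ρ(y) ≤ K e^{−c y²}`; in particular `ρ` is integrable and has finite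
moments of every order. -/
theorem invariant_density_gaussian_tail (β C₀ lamMinus lamPlus : ℝ)
    (hβ : 0 < β) (hC : 0 < C₀) (hlm : 0 < lamMinus) (hlp : 0 < lamPlus)
    (a : ℝ → ℝ) (ha : ContDiff ℝ 1 a)
    (halb : ∀ y : ℝ, lamMinus ≤ a y) (haub : ∀ y : ℝ, a y ≤ lamPlus)
    (f : ℝ → ℝ) (hf : Continuous f)
    (hdiss : ∀ y : ℝ, 2 * f y * y ≤ -(β / 2) * y ^ 2 + C₀) :
    (∃ K : ℝ, 0 < K ∧ ∃ c : ℝ, 0 < c ∧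
        ∀ y : ℝ, invDensity f a y ≤ K * Real.exp (-c * y ^ 2))
      ∧ Integrable (invDensity f a)
      ∧ ∀ k : ℕ, Integrable (fun y : ℝ => |y| ^ k * invDensity f a y) := by
  -- positivity of a
  have ha0 : ∀ y, 0 < a y := fun y => hlm.trans_le (halb y)
  set h : ℝ → ℝ := fun s => f s / a s with hh
  have hhcont : Continuous h := hf.div ha.continuous (fun s => (ha0 s).ne')
  set c₁ : ℝ := β / (4 * lamPlus) with hc₁
  set C₁ : ℝ := C₀ / (2 * lamMinus) with hC₁
  have hc₁0 : 0 < c₁ := by positivity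
  have hC₁0 : 0 < C₁ := by positivity
  -- key pointwise bound
  have key : ∀ s : ℝ, h s * s ≤ -c₁ * s ^ 2 + C₁ := by
    intro s
    have h1 := hdiss s
    have h2 : f s * s ≤ -(β/4) * s^2 + C₀/2 := by linarith
    have h3 : h s * s = f s * s / a s := by rw [hh]; ring
    rw [h3, div_le_iff₀ (ha0 s)]
    have hs2 : (0:ℝ) ≤ s^2 := sq_nonneg s
    have e1 : -(β/4) * s^2 ≤ -c₁ * s^2 * a s := by
      rw [hc₁]
      have : β / (4 * lamPlus) * a s ≤ β / 4 := by
        rw [div_mul_eq_mul_div, div_le_div_iff₀ (by positivity) (by norm_num)]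
        nlinarith [haub s]
      nlinarith
    have e2 : C₀/2 ≤ C₁ * a s := by
      rw [hC₁, div_mul_eq_mul_div, le_div_iff₀ (by positivity)]
      nlinarith [halb s]
    nlinarith
  -- bound of h on [-1,1]
  obtain ⟨M, hM⟩ := (isCompact_Icc : IsCompact (Set.Icc (-1:ℝ) 1)).exists_bound_of_continuousOn
    hhcont.continuousOn
  have hM0 : 0 ≤ M := le_trans (norm_nonneg (h 0)) (hM 0 (by norm_num))
  set G : ℝ → ℝ := fun y => ∫ s in (0:ℝ)..y, h s with hG
  have hint : ∀ u v : ℝ, IntervalIntegrable h volume u v := fun u v =>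
    hhcont.intervalIntegrable u v
  set c : ℝ := c₁ / 4 with hc
  have hc0 : 0 < c := by positivity
  set B : ℝ := M + c₁ + C₁ ^ 2 / c₁ with hB
  have hGb : ∀ y : ℝ, G y ≤ -c * y ^ 2 + B := by
    intro y
    rcases le_or_gt 1 y with hy | hy
    · -- y ≥ 1
      have split : G y = (∫ s in (0:ℝ)..1, h s) + ∫ s in (1:ℝ)..y, h s :=
        (intervalIntegral.integral_add_adjacent_intervals (hint 0 1) (hint 1 y)).symm
      have b1 : (∫ s in (0:ℝ)..1, h s) ≤ M := by
        calc (∫ s in (0:ℝ)..1, h s) ≤ ∫ s in (0:ℝ)..1, M := by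
              apply intervalIntegral.integral_mono_on (by norm_num) (hint 0 1)
                (intervalIntegrable_const)
              intro x hx
              have := hM x ⟨by linarith [hx.1], hx.2⟩
              exact le_trans (le_abs_self _) this
          _ = M := by simp
      have b2 : (∫ s in (1:ℝ)..y, h s) ≤ ∫ s in (1:ℝ)..y, (-c₁ * s + C₁) := by
        apply intervalIntegral.integral_mono_on hy (hint 1 y)
          (show IntervalIntegrable (fun s => -c₁ * s + C₁) volume 1 y from
            ((continuous_const.mul continuous_id').add continuous_const).intervalIntegrable 1 y)
        intro s hs
        have hs1 : (1:ℝ) ≤ s := hs.1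
        have hspos : 0 < s := by linarith
        have h4 : h s ≤ (-c₁ * s^2 + C₁) / s := by
          rw [le_div_iff₀ hspos]; exact key s
        refine h4.trans ?_
        rw [div_le_iff₀ hspos]
        nlinarith [hC₁0]
      have b3 : (∫ s in (1:ℝ)..y, (-c₁ * s + C₁)) =
          -c₁ * (y^2/2 - 1/2) + C₁ * (y - 1) := by
        rw [intervalIntegral.integral_add (by
            exact (continuous_const.mul continuous_id').intervalIntegrable 1 y)
          (intervalIntegrable_const), intervalIntegral.integral_const_mul,
          integral_id, intervalIntegral.integral_const]
        simp [smul_eq_mul]; ring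
      have hfin : G y ≤ M + (-c₁ * (y^2/2 - 1/2) + C₁ * (y - 1)) := by
        rw [split]; linarith [b1, b2.trans_eq b3]
      refine le_trans hfin ?_
      have hq : c₁ * (C₁^2/c₁) = C₁^2 := by field_simp
      rw [hc, hB]
      nlinarith [sq_nonneg (c₁*y - 2*C₁), hc₁0, hC₁0, hq, mul_pos hc₁0 hC₁0,
        mul_pos hc₁0 hc₁0]
    rcases le_or_gt y (-1) with hy' | hy'
    · -- y ≤ -1
      have split : G y = -((∫ s in y..(-1:ℝ), h s) + ∫ s in (-1:ℝ)..(0:ℝ), h s) := by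
        rw [intervalIntegral.integral_add_adjacent_intervals (hint y (-1)) (hint (-1) 0)]
        exact intervalIntegral.integral_symm y 0
      have b1 : -M ≤ (∫ s in (-1:ℝ)..(0:ℝ), h s) := by
        calc (-M : ℝ) = ∫ s in (-1:ℝ)..(0:ℝ), (-M : ℝ) := by simp
          _ ≤ ∫ s in (-1:ℝ)..(0:ℝ), h s := by
              apply intervalIntegral.integral_mono_on (by norm_num)
                intervalIntegrable_const (hint (-1) 0)
              intro x hx
              have := hM x ⟨hx.1, by linarith [hx.2]⟩
              exact le_trans (neg_le_neg this) (neg_abs_le _)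
      have b2 : (∫ s in y..(-1:ℝ), (-c₁ * s - C₁)) ≤ ∫ s in y..(-1:ℝ), h s := by
        apply intervalIntegral.integral_mono_on hy'
          (show IntervalIntegrable (fun s => -c₁ * s - C₁) volume y (-1) from
            ((continuous_const.mul continuous_id').sub continuous_const).intervalIntegrable y (-1))
          (hint y (-1))
        intro s hs
        have hs1 : s ≤ -1 := hs.2
        have hsneg : s < 0 := by linarith
        have := key s
        have : (-c₁ * s^2 + C₁) / s ≤ h s := by
          rw [div_le_iff_of_neg hsneg]
          nlinarith [key s]
        refine le_trans ?_ this
        rw [le_div_iff_of_neg hsneg]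
        nlinarith
      have b3 : (∫ s in y..(-1:ℝ), (-c₁ * s - C₁)) =
          -c₁ * (1/2 - y^2/2) - C₁ * (-1 - y) := by
        rw [intervalIntegral.integral_sub
          (show IntervalIntegrable (fun s => -c₁ * s) volume y (-1) from
            (continuous_const.mul continuous_id').intervalIntegrable y (-1))
          (intervalIntegrable_const), intervalIntegral.integral_const_mul,
          integral_id, intervalIntegral.integral_const]
        simp [smul_eq_mul]; ring
      have : G y ≤ -(-c₁ * (1/2 - y^2/2) - C₁ * (-1 - y) + (-M)) := by
        rw [split]
        apply neg_le_neg
        refine add_le_add ?_ b1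
        rw [← b3]; exact b2
      refine le_trans this ?_
      have hq : c₁ * (C₁^2/c₁) = C₁^2 := by field_simp
      rw [hc, hB]
      nlinarith [sq_nonneg (c₁*y + 2*C₁), hc₁0, hC₁0, hq, mul_pos hc₁0 hC₁0,
        mul_pos hc₁0 hc₁0]
    · -- |y| < 1
      have hb : ‖∫ s in (0:ℝ)..y, h s‖ ≤ M * |y - 0| := by
        apply intervalIntegral.norm_integral_le_of_norm_le_const
        intro x hx
        apply hM
        rcases le_total 0 y with h0 | h0
        · have hx' : x ∈ Set.uIcc (0:ℝ) y := Set.uIoc_subset_uIcc hx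
          rw [Set.uIcc_of_le h0] at hx'
          exact ⟨by linarith [hx'.1], by linarith [hx'.2]⟩
        · have hx' : x ∈ Set.uIcc (0:ℝ) y := Set.uIoc_subset_uIcc hx
          rw [Set.uIcc_of_ge h0] at hx'
          exact ⟨by linarith [hx'.1], by linarith [hx'.2]⟩
      have hy1 : |y| ≤ 1 := abs_le.mpr ⟨le_of_lt hy', le_of_lt hy⟩
      have hGy : G y ≤ M := by
        have h5 : G y ≤ M * |y| := by
          have h7 := le_trans (le_abs_self (G y))
            (by simpa [Real.norm_eq_abs] using hb : |G y| ≤ M * |y - 0|)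
          simpa using h7
        nlinarith [abs_nonneg y]
      have h6 : M ≤ -c * y^2 + B := by
        have hy2 : y^2 ≤ 1 := by nlinarith [sq_abs y, abs_nonneg y]
        have hq : (0:ℝ) ≤ C₁^2/c₁ := by positivity
        rw [hc, hB]
        nlinarith [hc₁0, hC₁0]
      linarith
  -- main tail bound
  have hρ_le : ∀ y : ℝ, invDensity f a y ≤ (lamMinus⁻¹ * Real.exp B) * Real.exp (-c * y ^ 2) := by
    intro y
    unfold invDensity
    have e1 : (a y)⁻¹ ≤ lamMinus⁻¹ := inv_anti₀ hlm (halb y)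
    have e2 : Real.exp (∫ s in (0:ℝ)..y, f s / a s) ≤ Real.exp B * Real.exp (-c * y^2) := by
      rw [← Real.exp_add]
      apply Real.exp_le_exp.mpr
      have := hGb y
      simp only [hG, hh] at this
      linarith
    calc (a y)⁻¹ * Real.exp (∫ s in (0:ℝ)..y, f s / a s)
        ≤ lamMinus⁻¹ * (Real.exp B * Real.exp (-c*y^2)) := by
          apply mul_le_mul e1 e2 (by positivity) (by positivity)
      _ = (lamMinus⁻¹ * Real.exp B) * Real.exp (-c * y ^ 2) := by ring
  set K : ℝ := lamMinus⁻¹ * Real.exp B with hK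
  have hK0 : 0 < K := by rw [hK]; positivity
  have hρ_nonneg : ∀ y, 0 ≤ invDensity f a y := by
    intro y
    exact mul_nonneg (inv_nonneg.mpr (ha0 y).le) (Real.exp_nonneg _)
  have hρ_cont : Continuous (invDensity f a) := by
    unfold invDensity
    exact (ha.continuous.inv₀ (fun y => (ha0 y).ne')).mul
      (Real.continuous_exp.comp (intervalIntegral.continuous_primitive hint 0))
  refine ⟨⟨K, hK0, c, hc0, hρ_le⟩, ?_, ?_⟩
  · apply Integrable.mono' ((integrable_exp_neg_mul_sq hc0).const_mul K)
      hρ_cont.aestronglyMeasurable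
    filter_upwards with y
    rw [Real.norm_eq_abs, abs_of_nonneg (hρ_nonneg y)]
    exact hρ_le y
  · intro k
    have hc20 : 0 < c/2 := by positivity
    set D : ℝ := K * (k.factorial : ℝ) * Real.exp (1/(2*c)) with hD
    apply Integrable.mono' ((integrable_exp_neg_mul_sq hc20).const_mul D)
      ((continuous_abs.pow k).mul hρ_cont).aestronglyMeasurable
    filter_upwards with y
    show ‖|y|^k * invDensity f a y‖ ≤ _
    rw [Real.norm_eq_abs, abs_of_nonneg (mul_nonneg (pow_nonneg (abs_nonneg y) k) (hρ_nonneg y))]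
    have step1 : |y|^k * invDensity f a y ≤ |y|^k * (K * Real.exp (-c * y^2)) :=
      mul_le_mul_of_nonneg_left (hρ_le y) (pow_nonneg (abs_nonneg y) k)
    have step2 : |y|^k ≤ (k.factorial : ℝ) * Real.exp |y| := by
      have h8 := Real.pow_div_factorial_le_exp |y| (abs_nonneg y) k
      rw [div_le_iff₀ (by positivity : (0:ℝ) < (k.factorial:ℝ))] at h8
      linarith
    have step3 : |y| ≤ c/2 * y^2 + 1/(2*c) := by
      have e : c * (|y| - 1/c)^2 = c * y^2 - 2*|y| + 1/c := by
        rw [sub_sq, sq_abs]; field_simp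
      have h9 : (0:ℝ) ≤ c * (|y| - 1/c)^2 := by positivity
      have e2 : 1/(2*c) = (1/c)/2 := by ring
      linarith
    calc |y|^k * invDensity f a y
        ≤ ((k.factorial:ℝ) * Real.exp |y|) * (K * Real.exp (-c * y^2)) := by
          refine le_trans step1 ?_
          apply mul_le_mul_of_nonneg_right step2 (mul_nonneg hK0.le (Real.exp_nonneg _))
      _ = K * (k.factorial:ℝ) * Real.exp (|y| + -c * y^2) := by
          rw [Real.exp_add]; ring
      _ ≤ K * (k.factorial:ℝ) * Real.exp (1/(2*c) + -(c/2) * y^2) := by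
          apply mul_le_mul_of_nonneg_left (Real.exp_le_exp.mpr (by linarith))
            (mul_nonneg hK0.le (Nat.cast_nonneg _))
      _ = D * Real.exp (-(c/2) * y^2) := by
          rw [hD, Real.exp_add]; ring
end

section
/- Let β, C₀, λ₋, λ₊ > 0, let a : ℝ → ℝ be continuously differentiable with λ₋ ≤ a(y) ≤ λ₊ for all y, and let f : ℝ → ℝ be continuous and satisfy 2 f(y) y ≤ −(β/2) y² + C₀ for all y ∈ ℝ. Suppose w : ℝ → ℝ is twice continuously differentiable, satisfies the homogeneous equation f(y) w'(y) + a(y) w''(y) = 0 for all y ∈ ℝ, and is polynomially bounded, i.e. there exist C > 0 and q ∈ ℕ with |w(y)| ≤ C (1 + |y|)^q for all y. Then w is constant. (This Liouville-type statement is the mechanism behind the uniqueness of the centered, polynomially growing solution of the one-dimensional Poisson equation in the paper's Lemma E.1.) -/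
open MeasureTheory Filter

/-- The integral of `f/a` from `0` to `y`. -/
noncomputable def Faux (f a : ℝ → ℝ) (y : ℝ) : ℝ := ∫ t in (0:ℝ)..y, f t / a t

private lemma deriv_repr (lamMinus : ℝ) (hlm : 0 < lamMinus)
    (a : ℝ → ℝ) (hac : Continuous a) (halb : ∀ y : ℝ, lamMinus ≤ a y)
    (f : ℝ → ℝ) (hf : Continuous f)
    (w : ℝ → ℝ) (hw : ContDiff ℝ 2 w)
    (heq : ∀ y : ℝ, f y * deriv w y + a y * iteratedDeriv 2 w y = 0) :
    ∀ y : ℝ, deriv w y = deriv w 0 * Real.exp (-(Faux f a y)) := by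
  have ha0 : ∀ t, (0:ℝ) < a t := fun t => lt_of_lt_of_le hlm (halb t)
  have hφ : Continuous fun t => f t / a t := hf.div hac fun t => (ha0 t).ne'
  have hF : ∀ u : ℝ, HasDerivAt (Faux f a) (f u / a u) u := fun u =>
    (hφ.integral_hasStrictDerivAt 0 u).hasDerivAt
  have hw2 : ContDiff ℝ (1 + 1) w := by exact_mod_cast hw
  have hw1 : ContDiff ℝ 1 (deriv w) := (contDiff_succ_iff_deriv.mp hw2).2.2
  have hiter : ∀ u : ℝ, iteratedDeriv 2 w u = deriv (deriv w) u := by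
    intro u; rw [iteratedDeriv_succ, iteratedDeriv_one]
  have hdw : ∀ u : ℝ, HasDerivAt (deriv w) (deriv (deriv w) u) u := fun u =>
    ((hw1.differentiable one_ne_zero) u).hasDerivAt
  have hode : ∀ u : ℝ, deriv (deriv w) u = -(f u / a u) * deriv w u := by
    intro u
    have h := heq u
    rw [hiter u] at h
    have hane : a u ≠ 0 := (ha0 u).ne'
    field_simp
    linear_combination h
  have hmul : ∀ u : ℝ, HasDerivAt (fun z => deriv w z * Real.exp (Faux f a z)) 0 u := by
    intro u
    have h2 : HasDerivAt (fun z => Real.exp (Faux f a z))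
        (Real.exp (Faux f a u) * (f u / a u)) u := (hF u).exp
    have h3 := (hdw u).mul h2
    refine h3.congr_deriv ?_
    rw [hode u]
    ring
  have hconst : ∀ u : ℝ, deriv w u * Real.exp (Faux f a u)
      = deriv w 0 * Real.exp (Faux f a 0) := fun u =>
    is_const_of_deriv_eq_zero (fun z => (hmul z).differentiableAt)
      (fun z => (hmul z).deriv) u 0
  have h0 : Faux f a 0 = 0 := intervalIntegral.integral_same
  intro y
  have hy := hconst y
  rw [h0, Real.exp_zero, mul_one] at hy
  calc deriv w y = deriv w y * Real.exp (Faux f a y) * Real.exp (-(Faux f a y)) := by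
        rw [mul_assoc, ← Real.exp_add, add_neg_cancel, Real.exp_zero, mul_one]
    _ = deriv w 0 * Real.exp (-(Faux f a y)) := by rw [hy]

private lemma aux_false (β C₀ lamPlus : ℝ)
    (hβ : 0 < β) (hC₀ : 0 < C₀) (hlp : 0 < lamPlus)
    (a f : ℝ → ℝ) (ha0 : ∀ y : ℝ, 0 < a y) (haub : ∀ y : ℝ, a y ≤ lamPlus)
    (hφ : Continuous fun t => f t / a t)
    (hdiss : ∀ y : ℝ, 2 * f y * y ≤ -(β / 2) * y ^ 2 + C₀)
    (w : ℝ → ℝ) (hw : ContDiff ℝ 2 w)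
    (hrepr : ∀ y : ℝ, deriv w y = deriv w 0 * Real.exp (-(Faux f a y)))
    (C : ℝ) (hCpos : 0 < C) (q : ℕ)
    (hpoly : ∀ y : ℝ, |w y| ≤ C * (1 + |y|) ^ q)
    (hpos : 0 < deriv w 0) : False := by
  set g0 := deriv w 0 with hg0
  set c := β / (8 * lamPlus) with hc
  have hcpos : 0 < c := div_pos hβ (by positivity)
  set T : ℝ := max 1 (Real.sqrt (4 * C₀ / β)) with hT
  have hT1 : (1:ℝ) ≤ T := le_max_left _ _
  have hT0 : (0:ℝ) < T := lt_of_lt_of_le one_pos hT1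
  have hsq : ∀ t : ℝ, T ≤ t → 4 * C₀ ≤ β * t ^ 2 := by
    intro t ht
    have h1 : Real.sqrt (4 * C₀ / β) ≤ t := le_trans (le_max_right _ _) ht
    have h2 : (0:ℝ) ≤ 4 * C₀ / β := by positivity
    have h3 : 4 * C₀ / β ≤ t ^ 2 := by
      nlinarith [Real.sq_sqrt h2, Real.sqrt_nonneg (4 * C₀ / β)]
    rw [div_le_iff₀ hβ] at h3
    linarith
  have hfa : ∀ t : ℝ, T ≤ t → f t / a t ≤ -c * t := by
    intro t ht
    have htpos : (0:ℝ) < t := lt_of_lt_of_le hT0 ht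
    have h1 := hdiss t
    have hsq' := hsq t ht
    have h2 : f t ≤ -(β / 8) * t := by nlinarith [mul_pos htpos htpos]
    rw [div_le_iff₀ (ha0 t)]
    have h3 : a t ≤ lamPlus := haub t
    have h4 : 0 < a t := ha0 t
    have key : c * a t ≤ β / 8 := by
      rw [hc, div_mul_eq_mul_div, div_le_div_iff₀ (by positivity) (by norm_num : (0:ℝ) < 8)]
      nlinarith [mul_le_mul_of_nonneg_left h3 hβ.le]
    have h5 : c * a t * t ≤ β / 8 * t := mul_le_mul_of_nonneg_right key htpos.le
    nlinarith
  have hint : ∀ u v : ℝ, IntervalIntegrable (fun t => f t / a t) volume u v :=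
    fun u v => hφ.intervalIntegrable u v
  have hFle : ∀ y : ℝ, T ≤ y → Faux f a y ≤ Faux f a T - c / 2 * (y ^ 2 - T ^ 2) := by
    intro y hy
    have hsplit : Faux f a T + (∫ t in T..y, f t / a t) = Faux f a y :=
      intervalIntegral.integral_add_adjacent_intervals (hint 0 T) (hint T y)
    have hmono : (∫ t in T..y, f t / a t) ≤ ∫ t in T..y, -c * t := by
      apply intervalIntegral.integral_mono_on hy (hint T y)
        ((continuous_const.mul continuous_id).intervalIntegrable T y)
      intro t htm
      exact hfa t htm.1
    have hval : (∫ t in T..y, -c * t) = -c * ((y ^ 2 - T ^ 2) / 2) := by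
      rw [intervalIntegral.integral_const_mul, integral_id]
    rw [hval] at hmono
    linarith
  have hgb : ∀ t : ℝ, T ≤ t →
      g0 * Real.exp (-(Faux f a T)) * Real.exp (c / 2 * (t ^ 2 - T ^ 2)) ≤ deriv w t := by
    intro t ht
    rw [hrepr t]
    have h1 : -(Faux f a T) + c / 2 * (t ^ 2 - T ^ 2) ≤ -(Faux f a t) := by
      have := hFle t ht; linarith
    have h2 : Real.exp (-(Faux f a T)) * Real.exp (c / 2 * (t ^ 2 - T ^ 2))
        ≤ Real.exp (-(Faux f a t)) := by
      rw [← Real.exp_add]; exact Real.exp_le_exp.mpr h1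
    rw [mul_assoc]
    exact mul_le_mul_of_nonneg_left h2 hpos.le
  have hwdiff : Differentiable ℝ w := hw.differentiable (by norm_num)
  have hdwc : Continuous (deriv w) := hw.continuous_deriv (by norm_num)
  have hftc : ∀ y : ℝ, w (y + 1) - w y = ∫ t in y..(y + 1), deriv w t := fun y =>
    (intervalIntegral.integral_deriv_eq_sub (fun x _ => hwdiff x)
      (hdwc.intervalIntegrable _ _)).symm
  have hlow : ∀ y : ℝ, T ≤ y →
      g0 * Real.exp (-(Faux f a T)) * Real.exp (c / 2 * (y ^ 2 - T ^ 2)) ≤ w (y + 1) - w y := by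
    intro y hy
    rw [hftc y]
    have hbd : ∀ t ∈ Set.Icc y (y + 1),
        g0 * Real.exp (-(Faux f a T)) * Real.exp (c / 2 * (y ^ 2 - T ^ 2)) ≤ deriv w t := by
      intro t htm
      have hty : y ≤ t := htm.1
      have hTt : T ≤ t := le_trans hy hty
      refine le_trans ?_ (hgb t hTt)
      have hy0 : (0:ℝ) < y := lt_of_lt_of_le hT0 hy
      have hsq2 : y ^ 2 ≤ t ^ 2 := by nlinarith
      have hexp : Real.exp (c / 2 * (y ^ 2 - T ^ 2)) ≤ Real.exp (c / 2 * (t ^ 2 - T ^ 2)) :=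
        Real.exp_le_exp.mpr (by nlinarith)
      have hA : (0:ℝ) ≤ g0 * Real.exp (-(Faux f a T)) :=
        mul_nonneg hpos.le (Real.exp_pos _).le
      exact mul_le_mul_of_nonneg_left hexp hA
    calc g0 * Real.exp (-(Faux f a T)) * Real.exp (c / 2 * (y ^ 2 - T ^ 2))
        = ∫ _ in y..(y + 1), g0 * Real.exp (-(Faux f a T)) * Real.exp (c / 2 * (y ^ 2 - T ^ 2)) := by
          rw [intervalIntegral.integral_const]; simp
      _ ≤ ∫ t in y..(y + 1), deriv w t :=
          intervalIntegral.integral_mono_on (by linarith) (intervalIntegrable_const)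
            (hdwc.intervalIntegrable _ _) hbd
  have hup : ∀ y : ℝ, 0 ≤ y → w (y + 1) - w y ≤ 2 * C * (2 + y) ^ q := by
    intro y hy
    have h1 := hpoly (y + 1)
    have h2 := hpoly y
    rw [abs_of_nonneg (by linarith : (0:ℝ) ≤ y + 1)] at h1
    rw [abs_of_nonneg hy] at h2
    rw [show (1 + (y + 1) : ℝ) = 2 + y by ring] at h1
    have h3 : (1 + y) ^ q ≤ (2 + y) ^ q := pow_le_pow_left₀ (by linarith) (by linarith) q
    have h4 : C * (1 + y) ^ q ≤ C * (2 + y) ^ q := mul_le_mul_of_nonneg_left h3 hCpos.le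
    have h5 := le_abs_self (w (y + 1))
    have h6 := neg_le_abs (w y)
    linarith
  set A : ℝ := g0 * Real.exp (-(Faux f a T)) with hA
  have hApos : 0 < A := mul_pos hpos (Real.exp_pos _)
  set D : ℝ := Real.log (2 * C / A) with hD
  have hlog : ∀ y : ℝ, T ≤ y → c / 2 * (y ^ 2 - T ^ 2) ≤ D + q * (1 + y) := by
    intro y hy
    have hb := le_trans (hlow y hy) (hup y (le_trans hT0.le hy))
    have hy0 : (0:ℝ) < y := lt_of_lt_of_le hT0 hy
    have hpow : (0:ℝ) < (2 + y) ^ q := pow_pos (by linarith) q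
    have h2C : (0:ℝ) < 2 * C / A := div_pos (by linarith) hApos
    have hX : Real.exp (c / 2 * (y ^ 2 - T ^ 2)) ≤ 2 * C / A * (2 + y) ^ q := by
      have hmul : A * Real.exp (c / 2 * (y ^ 2 - T ^ 2))
          ≤ A * (2 * C / A * (2 + y) ^ q) := by
        rw [show A * (2 * C / A * (2 + y) ^ q) = 2 * C * (2 + y) ^ q by
          field_simp]
        exact hb
      exact (mul_le_mul_iff_right₀ hApos).mp hmul
    have hlogle := Real.log_le_log (Real.exp_pos _) hX
    rw [Real.log_exp, Real.log_mul h2C.ne' hpow.ne', Real.log_pow] at hlogle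
    have hlog2 : Real.log (2 + y) ≤ 1 + y := by
      have := Real.log_le_sub_one_of_pos (by linarith : (0:ℝ) < 2 + y)
      linarith
    have hq : (q:ℝ) * Real.log (2 + y) ≤ (q:ℝ) * (1 + y) :=
      mul_le_mul_of_nonneg_left hlog2 (Nat.cast_nonneg q)
    rw [← hD] at hlogle
    linarith
  have hinner : Tendsto (fun y : ℝ => c / 2 * y - q) atTop atTop := by
    have h1 : Tendsto (fun y : ℝ => c / 2 * y) atTop atTop :=
      Tendsto.const_mul_atTop (by positivity) tendsto_id
    simpa [sub_eq_add_neg] using tendsto_atTop_add_const_right atTop (-(q:ℝ)) h1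
  have hP : Tendsto (fun y : ℝ => y * (c / 2 * y - q)) atTop atTop :=
    Tendsto.atTop_mul_atTop₀ tendsto_id hinner
  obtain ⟨y, h1, h2⟩ :=
    ((hP.eventually_gt_atTop (D + q + c / 2 * T ^ 2)).and (eventually_ge_atTop T)).exists
  have h3 := hlog y h2
  nlinarith

/-- Liouville-type statement behind uniqueness for the one-dimensional Poisson equation:
a polynomially bounded `C²` solution of the homogeneous equation `f w' + a w'' = 0`,
with uniformly elliptic `a` and dissipative `f`, is constant. -/
theorem liouville_polynomially_bounded (β C₀ lamMinus lamPlus : ℝ)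
    (hβ : 0 < β) (hC₀ : 0 < C₀) (hlm : 0 < lamMinus) (hlp : 0 < lamPlus)
    (a : ℝ → ℝ) (ha : ContDiff ℝ 1 a)
    (halb : ∀ y : ℝ, lamMinus ≤ a y) (haub : ∀ y : ℝ, a y ≤ lamPlus)
    (f : ℝ → ℝ) (hf : Continuous f)
    (hdiss : ∀ y : ℝ, 2 * f y * y ≤ -(β / 2) * y ^ 2 + C₀)
    (w : ℝ → ℝ) (hw : ContDiff ℝ 2 w)
    (heq : ∀ y : ℝ, f y * deriv w y + a y * iteratedDeriv 2 w y = 0)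
    (C : ℝ) (hCpos : 0 < C) (q : ℕ)
    (hpoly : ∀ y : ℝ, |w y| ≤ C * (1 + |y|) ^ q) :
    ∀ y₁ y₂ : ℝ, w y₁ = w y₂ := by
  have ha0 : ∀ t, (0:ℝ) < a t := fun t => lt_of_lt_of_le hlm (halb t)
  have hφ : Continuous fun t => f t / a t := hf.div ha.continuous fun t => (ha0 t).ne'
  have hrepr := deriv_repr lamMinus hlm a ha.continuous halb f hf w hw heq
  rcases lt_trichotomy (deriv w 0) 0 with hneg | hzero | hposd
  · exfalso
    have hdn : ∀ y : ℝ, deriv (fun z => -w z) y = -deriv w y := fun y => deriv.neg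
    refine aux_false β C₀ lamPlus hβ hC₀ hlp a f ha0 haub hφ hdiss (fun z => -w z) hw.neg
      ?_ C hCpos q (fun y => by simpa [abs_neg] using hpoly y) (by rw [hdn 0]; linarith)
    intro y
    rw [hdn y, hdn 0, hrepr y]
    ring
  · have hd0 : ∀ y : ℝ, deriv w y = 0 := by
      intro y; rw [hrepr y, hzero, zero_mul]
    intro y₁ y₂
    exact is_const_of_deriv_eq_zero (hw.differentiable (by norm_num)) hd0 y₁ y₂
  · exact absurd (aux_false β C₀ lamPlus hβ hC₀ hlp a f ha0 haub hφ hdiss w hw hrepr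
      C hCpos q hpoly hposd) not_false
end

section
/- Let λ₋ > 0. For i = 1, 2 let f_i : ℝ → ℝ be continuous and a_i : ℝ → ℝ be continuously differentiable with a_i(y) ≥ λ₋ for all y, and suppose ρ_i(y) := a_i(y)^{-1} exp(∫_0^y f_i(s)/a_i(s) ds) is Lebesgue integrable on ℝ; set π_i := ρ_i / ∫_ℝ ρ_i. Let h₁, h₂ : ℝ → ℝ be continuous with h_i π_j integrable for all i, j ∈ {1,2}. Suppose v : ℝ → ℝ is twice continuously differentiable and solves f₂ v' + a₂ v'' = h₂ − ∫_ℝ h₂ π₂ dy on ℝ, that (f₁ v' + a₁ v'') π₁ is integrable on ℝ, and that a₁(y) π₁(y) v'(y) → 0 as y → ±∞. Then ∫_ℝ h₁ π₁ dy − ∫_ℝ h₂ π₂ dy = ∫_ℝ [ h₁(y) − h₂(y) − ( (f₁(y) − f₂(y)) v'(y) + (a₁(y) − a₂(y)) v''(y) ) ] π₁(y) dy. (This is the one-dimensional instance of the paper's transfer formulas (C.1)–(C.2) expressing the difference of averages against two invariant measures via an auxiliary Poisson equation.) -/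
open MeasureTheory Filter

/-- The normalized invariant density `π = ρ / ∫ρ`. -/
noncomputable def invProb (f a : ℝ → ℝ) (y : ℝ) : ℝ :=
  invDensity f a y / ∫ t : ℝ, invDensity f a t

/-- One-dimensional transfer formula (paper's formulas (C.1)–(C.2)): the difference of the
averages of `h₁, h₂` against the two invariant probability densities `π₁, π₂` equals the
`π₁`-average of `h₁ − h₂ − (L₁ − L₂)v`, where `v` solves the Poisson equation
`L₂ v = h₂ − ∫ h₂ π₂`. -/
theorem transfer_formula (lamMinus : ℝ) (hlam : 0 < lamMinus)
    (f₁ f₂ a₁ a₂ : ℝ → ℝ)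
    (hf₁ : Continuous f₁) (hf₂ : Continuous f₂)
    (ha₁ : ContDiff ℝ 1 a₁) (ha₂ : ContDiff ℝ 1 a₂)
    (ha₁b : ∀ y : ℝ, lamMinus ≤ a₁ y) (ha₂b : ∀ y : ℝ, lamMinus ≤ a₂ y)
    (hρ₁ : Integrable (invDensity f₁ a₁)) (hρ₂ : Integrable (invDensity f₂ a₂))
    (h₁ h₂ : ℝ → ℝ) (hh₁ : Continuous h₁) (hh₂ : Continuous h₂)
    (hint11 : Integrable (fun y : ℝ => h₁ y * invProb f₁ a₁ y))
    (hint12 : Integrable (fun y : ℝ => h₁ y * invProb f₂ a₂ y))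
    (hint21 : Integrable (fun y : ℝ => h₂ y * invProb f₁ a₁ y))
    (hint22 : Integrable (fun y : ℝ => h₂ y * invProb f₂ a₂ y))
    (v : ℝ → ℝ) (hv : ContDiff ℝ 2 v)
    (hveq : ∀ y : ℝ,
      f₂ y * deriv v y + a₂ y * iteratedDeriv 2 v y
        = h₂ y - ∫ t : ℝ, h₂ t * invProb f₂ a₂ t)
    (hvint : Integrable (fun y : ℝ =>
      (f₁ y * deriv v y + a₁ y * iteratedDeriv 2 v y) * invProb f₁ a₁ y))
    (hbdryTop : Tendsto (fun y : ℝ => a₁ y * invProb f₁ a₁ y * deriv v y)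
      atTop (nhds 0))
    (hbdryBot : Tendsto (fun y : ℝ => a₁ y * invProb f₁ a₁ y * deriv v y)
      atBot (nhds 0)) :
    (∫ y : ℝ, h₁ y * invProb f₁ a₁ y) - (∫ y : ℝ, h₂ y * invProb f₂ a₂ y)
      = ∫ y : ℝ,
          (h₁ y - h₂ y
            - ((f₁ y - f₂ y) * deriv v y + (a₁ y - a₂ y) * iteratedDeriv 2 v y))
            * invProb f₁ a₁ y := by
  have ha₁pos : ∀ y, (0:ℝ) < a₁ y := fun y => hlam.trans_le (ha₁b y)
  have ha₁ne : ∀ y, a₁ y ≠ 0 := fun y => (ha₁pos y).ne'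
  obtain ⟨Z, hZ⟩ : ∃ Z : ℝ, Z = ∫ t : ℝ, invDensity f₁ a₁ t := ⟨_, rfl⟩
  have hρpos : ∀ y, 0 < invDensity f₁ a₁ y := fun y =>
    mul_pos (inv_pos.2 (ha₁pos y)) (Real.exp_pos _)
  have hZpos : 0 < Z := by
    rw [hZ]
    rw [integral_pos_iff_support_of_nonneg (fun y => (hρpos y).le) hρ₁]
    have : Function.support (invDensity f₁ a₁) = Set.univ :=
      Set.eq_univ_of_forall fun y => (hρpos y).ne'
    simp [this]
  have hπint : Integrable (invProb f₁ a₁) := hρ₁.div_const _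
  have hπone : ∫ y : ℝ, invProb f₁ a₁ y = 1 := by
    simp only [invProb, ← hZ, integral_div]
    exact div_self hZpos.ne'
  set c₂ : ℝ := ∫ t : ℝ, h₂ t * invProb f₂ a₂ t with hc₂
  -- the exponent
  set E : ℝ → ℝ := fun y => ∫ s in (0:ℝ)..y, f₁ s / a₁ s with hE
  have hcontE : Continuous fun s => f₁ s / a₁ s := hf₁.div ha₁.continuous ha₁ne
  have hEd : ∀ y : ℝ, HasDerivAt E (f₁ y / a₁ y) y := fun y =>
    (hcontE.integral_hasStrictDerivAt 0 y).hasDerivAt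
  have hFeq : (fun y : ℝ => a₁ y * invProb f₁ a₁ y * deriv v y)
      = fun y => Real.exp (E y) / Z * deriv v y := by
    funext y
    simp only [invProb, hE]
    rw [← hZ]
    simp only [invDensity]
    field_simp [ha₁ne y, hZpos.ne']
    try ring
  -- second derivative of v
  have hv1 : ContDiff ℝ ((1:ℕ) + 1) v := by exact_mod_cast hv
  have hvd : Differentiable ℝ (deriv v) :=
    ((contDiff_succ_iff_deriv.mp hv1).2.2.differentiable one_ne_zero)
  have hv'' : ∀ y : ℝ, HasDerivAt (deriv v) (iteratedDeriv 2 v y) y := by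
    intro y
    rw [show (2:ℕ) = 1 + 1 from rfl, iteratedDeriv_succ, iteratedDeriv_one]
    exact (hvd y).hasDerivAt
  have hderiv : ∀ y : ℝ, HasDerivAt (fun y => Real.exp (E y) / Z * deriv v y)
      ((f₁ y * deriv v y + a₁ y * iteratedDeriv 2 v y) * invProb f₁ a₁ y) y := by
    intro y
    have h1 : HasDerivAt (fun y => Real.exp (E y) / Z)
        (Real.exp (E y) * (f₁ y / a₁ y) / Z) y := ((hEd y).exp).div_const Z
    have h2 : HasDerivAt (fun y => Real.exp (E y) / Z * deriv v y) _ y := h1.mul (hv'' y)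
    convert h2 using 1
    simp only [invProb, hE]
    rw [← hZ]
    simp only [invDensity]
    field_simp [ha₁ne y, hZpos.ne']
    try ring
  rw [hFeq] at hbdryTop hbdryBot
  have hkey : ∫ y : ℝ,
      (f₁ y * deriv v y + a₁ y * iteratedDeriv 2 v y) * invProb f₁ a₁ y = 0 := by
    have := integral_of_hasDerivAt_of_tendsto hderiv hvint hbdryBot hbdryTop
    simpa using this
  have hintc : Integrable (fun y : ℝ => c₂ * invProb f₁ a₁ y) := hπint.const_mul c₂
  have hptw : ∀ y : ℝ,
      (h₁ y - h₂ y - ((f₁ y - f₂ y) * deriv v y + (a₁ y - a₂ y) * iteratedDeriv 2 v y))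
          * invProb f₁ a₁ y
        = h₁ y * invProb f₁ a₁ y
            - (f₁ y * deriv v y + a₁ y * iteratedDeriv 2 v y) * invProb f₁ a₁ y
            - c₂ * invProb f₁ a₁ y := by
    intro y
    have h := hveq y
    linear_combination (invProb f₁ a₁ y) * h
  calc (∫ y : ℝ, h₁ y * invProb f₁ a₁ y) - (∫ y : ℝ, h₂ y * invProb f₂ a₂ y)
      = (∫ y : ℝ, h₁ y * invProb f₁ a₁ y)
          - (∫ y : ℝ, (f₁ y * deriv v y + a₁ y * iteratedDeriv 2 v y) * invProb f₁ a₁ y)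
          - ∫ y : ℝ, c₂ * invProb f₁ a₁ y := by
        rw [hkey, MeasureTheory.integral_const_mul, hπone, ← hc₂]
        ring
    _ = ∫ y : ℝ, (h₁ y * invProb f₁ a₁ y
          - (f₁ y * deriv v y + a₁ y * iteratedDeriv 2 v y) * invProb f₁ a₁ y
          - c₂ * invProb f₁ a₁ y) := by
        have i1 : Integrable (fun y : ℝ => h₁ y * invProb f₁ a₁ y
            - (f₁ y * deriv v y + a₁ y * iteratedDeriv 2 v y) * invProb f₁ a₁ y) :=
          hint11.sub hvint
        rw [integral_sub i1 hintc, integral_sub hint11 hvint]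
    _ = _ := integral_congr_ae (Filter.Eventually.of_forall fun y => (hptw y).symm)
end

section
/- Let λ₋ > 0, let τ₁, τ₂, σ, b, f : ℝ → ℝ be continuous, set a := (τ₁² + τ₂²)/2 and assume a is continuously differentiable with a(y) ≥ λ₋ for all y, and define ρ(y) := a(y)^{-1} exp(∫_0^y f(s)/a(s) ds). Suppose Φ : ℝ → ℝ is twice continuously differentiable and solves the Poisson equation f Φ' + a Φ'' = −b on ℝ; assume b Φ ρ, σ τ₁ Φ' ρ, σ² ρ and a (Φ')² ρ are Lebesgue integrable on ℝ, and that a(y) ρ(y) Φ(y) Φ'(y) → 0 as y → ±∞. Then ∫_ℝ ( b(y) Φ(y) + σ(y) τ₁(y) Φ'(y) + σ(y)²/2 ) ρ(y) dy = (1/2) ∫_ℝ [ ( τ₂(y) Φ'(y) )² + ( σ(y) + τ₁(y) Φ'(y) )² ] ρ(y) dy; in particular the left-hand side is nonnegative. (This is the alternative representation (3.8) of the homogenized diffusion coefficient D̄ in the paper's Remark 3.1, which shows D̄ ≥ 0.) -/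
open MeasureTheory Filter

/-- Alternative (integration-by-parts) representation (3.8) of the homogenized diffusion
coefficient: if `Φ` solves the Poisson equation `f Φ' + a Φ'' = −b` then
`∫ (bΦ + στ₁Φ' + σ²/2) ρ = (1/2)∫ [(τ₂Φ')² + (σ + τ₁Φ')²] ρ`; in particular the
left-hand side is nonnegative. -/
theorem homogenized_diffusion_alternative_form (lamMinus : ℝ) (hlam : 0 < lamMinus)
    (τ₁ τ₂ σ b f : ℝ → ℝ)
    (hτ₁ : Continuous τ₁) (hτ₂ : Continuous τ₂) (hσ : Continuous σ)
    (hb : Continuous b) (hf : Continuous f)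
    (a : ℝ → ℝ) (hadef : a = fun y : ℝ => (τ₁ y ^ 2 + τ₂ y ^ 2) / 2)
    (ha : ContDiff ℝ 1 a) (hab : ∀ y : ℝ, lamMinus ≤ a y)
    (Φ : ℝ → ℝ) (hΦ : ContDiff ℝ 2 Φ)
    (hpoisson : ∀ y : ℝ, f y * deriv Φ y + a y * iteratedDeriv 2 Φ y = -b y)
    (hint1 : Integrable (fun y : ℝ => b y * Φ y * invDensity f a y))
    (hint2 : Integrable (fun y : ℝ => σ y * τ₁ y * deriv Φ y * invDensity f a y))
    (hint3 : Integrable (fun y : ℝ => σ y ^ 2 * invDensity f a y))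
    (hint4 : Integrable (fun y : ℝ => a y * (deriv Φ y) ^ 2 * invDensity f a y))
    (hbdryTop : Tendsto (fun y : ℝ => a y * invDensity f a y * Φ y * deriv Φ y)
      atTop (nhds 0))
    (hbdryBot : Tendsto (fun y : ℝ => a y * invDensity f a y * Φ y * deriv Φ y)
      atBot (nhds 0)) :
    (∫ y : ℝ, (b y * Φ y + σ y * τ₁ y * deriv Φ y + σ y ^ 2 / 2) * invDensity f a y)
      = (1 / 2) * ∫ y : ℝ,
          ((τ₂ y * deriv Φ y) ^ 2 + (σ y + τ₁ y * deriv Φ y) ^ 2) * invDensity f a y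
    ∧ 0 ≤ ∫ y : ℝ,
        (b y * Φ y + σ y * τ₁ y * deriv Φ y + σ y ^ 2 / 2) * invDensity f a y := by
  have hapos : ∀ y, 0 < a y := fun y => lt_of_lt_of_le hlam (hab y)
  have ha0 : ∀ y, a y ≠ 0 := fun y => (hapos y).ne'
  have hρpos : ∀ y, 0 < invDensity f a y := fun y =>
    mul_pos (inv_pos.2 (hapos y)) (Real.exp_pos _)
  -- continuity of f/a
  have hfa : Continuous (fun s => f s / a s) := hf.div ha.continuous ha0
  set E := fun y : ℝ => Real.exp (∫ s in (0:ℝ)..y, f s / a s) with hE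
  have hE' : ∀ y, HasDerivAt E (f y / a y * E y) y := by
    intro y
    have h1 : HasDerivAt (fun u => ∫ s in (0:ℝ)..u, f s / a s) (f y / a y) y :=
      intervalIntegral.integral_hasDerivAt_right (hfa.intervalIntegrable _ _)
        hfa.stronglyMeasurable.stronglyMeasurableAtFilter hfa.continuousAt
    simpa [hE, mul_comm] using h1.exp
  -- derivatives of Φ
  have hΦd : Differentiable ℝ Φ := hΦ.differentiable (by norm_num)
  have hΦ'c : ContDiff ℝ 1 (deriv Φ) := by
    have h2 : ((2 : ℕ) : WithTop ℕ∞) = (1 : WithTop ℕ∞) + 1 := by norm_num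
    exact (contDiff_succ_iff_deriv.mp (by exact_mod_cast hΦ)).2.2
  have hΦ'd : Differentiable ℝ (deriv Φ) := hΦ'c.differentiable one_ne_zero
  have hΦ'' : ∀ y, HasDerivAt (deriv Φ) (iteratedDeriv 2 Φ y) y := by
    intro y
    have : iteratedDeriv 2 Φ = deriv (deriv Φ) := by
      rw [show (2 : ℕ) = 1 + 1 from rfl, iteratedDeriv_succ, iteratedDeriv_one]
    rw [this]
    exact (hΦ'd y).hasDerivAt
  -- the function we integrate by parts
  set g : ℝ → ℝ := fun y => E y * (Φ y * deriv Φ y) with hg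
  set g' : ℝ → ℝ := fun y =>
    a y * (deriv Φ y) ^ 2 * invDensity f a y - b y * Φ y * invDensity f a y with hg'
  have hgderiv : ∀ y, HasDerivAt g (g' y) y := by
    intro y
    have hP : HasDerivAt (fun y => Φ y * deriv Φ y)
        (deriv Φ y * deriv Φ y + Φ y * iteratedDeriv 2 Φ y) y :=
      ((hΦd y).hasDerivAt).mul (hΦ'' y)
    have h : HasDerivAt (fun y => E y * (Φ y * deriv Φ y)) _ y := (hE' y).mul hP
    have hbval : b y = -(f y * deriv Φ y + a y * iteratedDeriv 2 Φ y) := by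
      have := hpoisson y; linarith
    convert h using 1
    simp only [hg', invDensity, hbval, hE]
    field_simp [ha0 y]
    ring
  have hgint : Integrable g' := hint4.sub hint1
  have hgeq : (fun y : ℝ => a y * invDensity f a y * Φ y * deriv Φ y) = g := by
    funext y
    simp only [hg, invDensity, hE]
    field_simp [ha0 y]
  rw [hgeq] at hbdryTop hbdryBot
  have hzero : ∫ y, g' y = 0 := by
    simpa using MeasureTheory.integral_of_hasDerivAt_of_tendsto hgderiv hgint hbdryBot hbdryTop
  have key : (∫ y, b y * Φ y * invDensity f a y)
      = ∫ y, a y * (deriv Φ y) ^ 2 * invDensity f a y := by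
    have := integral_sub hint4 hint1
    rw [← hg'] at this
    rw [this] at hzero
    linarith
  -- main equality
  have hmain : (∫ y : ℝ, (b y * Φ y + σ y * τ₁ y * deriv Φ y + σ y ^ 2 / 2) * invDensity f a y)
      = (1 / 2) * ∫ y : ℝ,
          ((τ₂ y * deriv Φ y) ^ 2 + (σ y + τ₁ y * deriv Φ y) ^ 2) * invDensity f a y := by
    have hL : (fun y : ℝ => (b y * Φ y + σ y * τ₁ y * deriv Φ y + σ y ^ 2 / 2) * invDensity f a y)
        = fun y => b y * Φ y * invDensity f a y
            + (σ y * τ₁ y * deriv Φ y * invDensity f a y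
              + (1/2) * (σ y ^ 2 * invDensity f a y)) := by
      funext y; ring
    have hR : (fun y : ℝ =>
          ((τ₂ y * deriv Φ y) ^ 2 + (σ y + τ₁ y * deriv Φ y) ^ 2) * invDensity f a y)
        = fun y => 2 * (a y * (deriv Φ y) ^ 2 * invDensity f a y)
            + (2 * (σ y * τ₁ y * deriv Φ y * invDensity f a y)
              + σ y ^ 2 * invDensity f a y) := by
      funext y; simp only [hadef]; ring
    have i5 : Integrable (fun y : ℝ => σ y * τ₁ y * deriv Φ y * invDensity f a y
        + (1:ℝ)/2 * (σ y ^ 2 * invDensity f a y)) := hint2.add (hint3.const_mul _)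
    have i6 : Integrable (fun y : ℝ => 2 * (σ y * τ₁ y * deriv Φ y * invDensity f a y)
        + σ y ^ 2 * invDensity f a y) := (hint2.const_mul 2).add hint3
    rw [hL, hR,
      integral_add hint1 i5,
      integral_add hint2 (hint3.const_mul _),
      integral_add (hint4.const_mul 2) i6,
      integral_add (hint2.const_mul 2) hint3,
      integral_const_mul, integral_const_mul, integral_const_mul, key]
    ring
  refine ⟨hmain, ?_⟩
  rw [hmain]
  have : 0 ≤ ∫ y : ℝ,
      ((τ₂ y * deriv Φ y) ^ 2 + (σ y + τ₁ y * deriv Φ y) ^ 2) * invDensity f a y :=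
    integral_nonneg fun y =>
      mul_nonneg (add_nonneg (sq_nonneg _) (sq_nonneg _)) (hρpos y).le
  linarith
end

section
/- Fix an integer N ≥ 2, an index i ∈ {1, …, N}, and points x₁, …, x_N ∈ ℝ. Let μ := (1/N) Σ_{j=1}^{N} δ_{x_j} and μ^{-i} := (1/(N−1)) Σ_{j≠i} δ_{x_j}, and define the measure γ on ℝ × ℝ by γ := Σ_{j≠i} [ (1/N) δ_{(x_j, x_j)} + (1/(N(N−1))) δ_{(x_i, x_j)} ]. Then: (i) γ is a probability measure on ℝ × ℝ; (ii) the pushforward of γ under the first coordinate projection equals μ; (iii) the pushforward of γ under the second coordinate projection equals μ^{-i}; and (iv) ∫_{ℝ×ℝ} |u − v|² dγ(u, v) = (1/(N(N−1))) Σ_{j≠i} |x_j − x_i|². (This explicit coupling, constructed in the paper's Appendix D, bounds the squared 2-Wasserstein distance between the empirical measure of N points and the empirical measure with the i-th point removed.) -/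
open MeasureTheory
open scoped ENNReal

lemma my_integrable_dirac {α E : Type*} [MeasurableSpace α] [MeasurableSingletonClass α]
    [NormedAddCommGroup E] {f : α → E} (hf : StronglyMeasurable f) (a : α) :
    Integrable f (Measure.dirac a) := by
  refine ⟨hf.aestronglyMeasurable, ?_⟩
  simp only [HasFiniteIntegral, lintegral_dirac]
  exact ENNReal.coe_lt_top

lemma my_map_sum {ι α β : Type*} [MeasurableSpace α] [MeasurableSpace β]
    (s : Finset ι) (μ : ι → Measure α) {f : α → β} (hf : Measurable f) :
    (∑ j ∈ s, μ j).map f = ∑ j ∈ s, (μ j).map f := by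
  classical
  induction s using Finset.induction with
  | empty => simp [Measure.map_zero]
  | insert _ _ h ih =>
    rw [Finset.sum_insert h, Finset.sum_insert h, Measure.map_add _ _ hf, ih]

/-- The explicit coupling from the paper's Appendix D between the empirical measure of
`N` points and the empirical measure with the `i`-th point removed:
`γ = Σ_{j≠i} [ (1/N) δ_{(x_j,x_j)} + (1/(N(N−1))) δ_{(x_i,x_j)} ]` is a probability
measure with first marginal `μ`, second marginal `μ^{-i}`, and
`∫ |u−v|² dγ = (1/(N(N−1))) Σ_{j≠i} |x_j − x_i|²`. -/
theorem empirical_measure_coupling (N : ℕ) (hN : 2 ≤ N) (i : Fin N) (x : Fin N → ℝ) :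
    let μ : Measure ℝ := (N : ℝ≥0∞)⁻¹ • ∑ j : Fin N, Measure.dirac (x j)
    let μi : Measure ℝ :=
      ((N : ℝ≥0∞) - 1)⁻¹ • ∑ j ∈ Finset.univ.erase i, Measure.dirac (x j)
    let γ : Measure (ℝ × ℝ) := ∑ j ∈ Finset.univ.erase i,
      ((N : ℝ≥0∞)⁻¹ • Measure.dirac (x j, x j)
        + ((N : ℝ≥0∞) * ((N : ℝ≥0∞) - 1))⁻¹ • Measure.dirac (x i, x j))
    IsProbabilityMeasure γ
      ∧ γ.map Prod.fst = μ
      ∧ γ.map Prod.snd = μi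
      ∧ ∫ p : ℝ × ℝ, (p.1 - p.2) ^ 2 ∂γ
          = (1 / ((N : ℝ) * ((N : ℝ) - 1)))
            * ∑ j ∈ Finset.univ.erase i, (x j - x i) ^ 2 := by
  intro μ μi γ
  have hn0 : (N : ℝ≥0∞) ≠ 0 := Nat.cast_ne_zero.mpr (by omega)
  have hnt : (N : ℝ≥0∞) ≠ ⊤ := ENNReal.natCast_ne_top N
  have hsub : (N : ℝ≥0∞) - 1 = ((N - 1 : ℕ) : ℝ≥0∞) := by simp
  have hm0 : ((N - 1 : ℕ) : ℝ≥0∞) ≠ 0 := Nat.cast_ne_zero.mpr (by omega)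
  have hmt : ((N - 1 : ℕ) : ℝ≥0∞) ≠ ⊤ := ENNReal.natCast_ne_top _
  have hmN : ((N - 1 : ℕ) : ℝ≥0∞) + 1 = (N : ℝ≥0∞) := by
    exact_mod_cast congrArg (Nat.cast : ℕ → ℝ≥0∞) (Nat.succ_pred_eq_of_pos (by omega : 0 < N))
  have hinv : ((N : ℝ≥0∞) * ((N : ℝ≥0∞) - 1))⁻¹
      = (N : ℝ≥0∞)⁻¹ * (((N - 1 : ℕ) : ℝ≥0∞))⁻¹ := by
    rw [hsub, ENNReal.mul_inv (Or.inl hn0) (Or.inl hnt)]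
  have key1 : ((N - 1 : ℕ) : ℝ≥0∞) * ((N : ℝ≥0∞) * ((N : ℝ≥0∞) - 1))⁻¹
      = (N : ℝ≥0∞)⁻¹ := by
    rw [hinv, mul_comm ((N : ℝ≥0∞))⁻¹, ← mul_assoc, ENNReal.mul_inv_cancel hm0 hmt, one_mul]
  have key2 : (N : ℝ≥0∞)⁻¹ + ((N : ℝ≥0∞) * ((N : ℝ≥0∞) - 1))⁻¹
      = ((N : ℝ≥0∞) - 1)⁻¹ := by
    rw [hinv, hsub]
    calc (N : ℝ≥0∞)⁻¹ + (N : ℝ≥0∞)⁻¹ * (((N - 1 : ℕ) : ℝ≥0∞))⁻¹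
        = (N : ℝ≥0∞)⁻¹ * ((((N - 1 : ℕ) : ℝ≥0∞)) + 1) * (((N - 1 : ℕ) : ℝ≥0∞))⁻¹ := by
          rw [mul_add, mul_one, add_mul, mul_assoc,
            ENNReal.mul_inv_cancel hm0 hmt, mul_one, add_comm]
      _ = (((N - 1 : ℕ) : ℝ≥0∞))⁻¹ := by
          rw [hmN, ENNReal.inv_mul_cancel hn0 hnt, one_mul]
  have hcard : (Finset.univ.erase i).card = N - 1 := by
    rw [Finset.card_erase_of_mem (Finset.mem_univ i), Finset.card_univ, Fintype.card_fin]
  have hitop : ((N : ℝ≥0∞) * ((N : ℝ≥0∞) - 1))⁻¹ ≠ ⊤ := by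
    rw [hinv]
    exact ENNReal.mul_ne_top (ENNReal.inv_ne_top.mpr hn0) (ENNReal.inv_ne_top.mpr hm0)
  refine ⟨?_, ?_, ?_, ?_⟩
  · constructor
    show γ Set.univ = 1
    simp only [γ, Measure.finset_sum_apply, Measure.coe_add, Measure.coe_smul,
      Pi.add_apply, Pi.smul_apply, Measure.dirac_apply' _ MeasurableSet.univ,
      Set.indicator_univ, Pi.one_apply, smul_eq_mul, mul_one]
    rw [Finset.sum_const, hcard, nsmul_eq_mul, mul_add, key1]
    have : ((N - 1 : ℕ) : ℝ≥0∞) * (N : ℝ≥0∞)⁻¹ + (N : ℝ≥0∞)⁻¹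
        = (((N - 1 : ℕ) : ℝ≥0∞) + 1) * (N : ℝ≥0∞)⁻¹ := by rw [add_mul, one_mul]
    rw [this, hmN, ENNReal.mul_inv_cancel hn0 hnt]
  · rw [show γ.map Prod.fst = ∑ j ∈ Finset.univ.erase i,
        (((N : ℝ≥0∞)⁻¹ • Measure.dirac (x j, x j)
          + ((N : ℝ≥0∞) * ((N : ℝ≥0∞) - 1))⁻¹ • Measure.dirac (x i, x j)).map Prod.fst)
      from my_map_sum _ _ measurable_fst]
    simp only [Measure.map_add _ _ measurable_fst, Measure.map_smul,
      Measure.map_dirac' measurable_fst]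
    rw [Finset.sum_add_distrib, Finset.sum_const, hcard, ← Nat.cast_smul_eq_nsmul ℝ≥0∞,
      smul_smul, key1, show μ = (N : ℝ≥0∞)⁻¹ • ∑ j : Fin N, Measure.dirac (x j) from rfl,
      ← Finset.add_sum_erase _ _ (Finset.mem_univ i), smul_add, ← Finset.smul_sum, add_comm]
  · rw [show γ.map Prod.snd = ∑ j ∈ Finset.univ.erase i,
        (((N : ℝ≥0∞)⁻¹ • Measure.dirac (x j, x j)
          + ((N : ℝ≥0∞) * ((N : ℝ≥0∞) - 1))⁻¹ • Measure.dirac (x i, x j)).map Prod.snd)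
      from my_map_sum _ _ measurable_snd]
    simp only [Measure.map_add _ _ measurable_snd, Measure.map_smul,
      Measure.map_dirac' measurable_snd]
    have : ∀ j ∈ Finset.univ.erase i,
        (N : ℝ≥0∞)⁻¹ • Measure.dirac (x j)
          + ((N : ℝ≥0∞) * ((N : ℝ≥0∞) - 1))⁻¹ • Measure.dirac (x j)
        = ((N : ℝ≥0∞) - 1)⁻¹ • Measure.dirac (x j) := by
      intro j _
      rw [← add_smul, key2]
    rw [Finset.sum_congr rfl this, ← Finset.smul_sum]
  · have hf : StronglyMeasurable (fun p : ℝ × ℝ => (p.1 - p.2) ^ 2) :=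
      ((measurable_fst.sub measurable_snd).pow_const 2).stronglyMeasurable
    have hint : ∀ j ∈ Finset.univ.erase i,
        Integrable (fun p : ℝ × ℝ => (p.1 - p.2) ^ 2)
          ((N : ℝ≥0∞)⁻¹ • Measure.dirac (x j, x j)
            + ((N : ℝ≥0∞) * ((N : ℝ≥0∞) - 1))⁻¹ • Measure.dirac (x i, x j)) := by
      intro j _
      exact ((my_integrable_dirac hf _).smul_measure (ENNReal.inv_ne_top.mpr hn0)).add_measure
        ((my_integrable_dirac hf _).smul_measure hitop)
    rw [show (∫ p : ℝ × ℝ, (p.1 - p.2) ^ 2 ∂γ) = ∑ j ∈ Finset.univ.erase i,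
        ∫ p : ℝ × ℝ, (p.1 - p.2) ^ 2 ∂(((N : ℝ≥0∞)⁻¹ • Measure.dirac (x j, x j)
          + ((N : ℝ≥0∞) * ((N : ℝ≥0∞) - 1))⁻¹ • Measure.dirac (x i, x j)))
      from integral_finset_sum_measure hint]
    have hterm : ∀ j ∈ Finset.univ.erase i,
        (∫ p : ℝ × ℝ, (p.1 - p.2) ^ 2 ∂(((N : ℝ≥0∞)⁻¹ • Measure.dirac (x j, x j)
          + ((N : ℝ≥0∞) * ((N : ℝ≥0∞) - 1))⁻¹ • Measure.dirac (x i, x j))))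
        = (1 / ((N : ℝ) * ((N : ℝ) - 1))) * (x j - x i) ^ 2 := by
      intro j _
      rw [integral_add_measure ((my_integrable_dirac hf _).smul_measure
          (ENNReal.inv_ne_top.mpr hn0)) ((my_integrable_dirac hf _).smul_measure hitop),
        integral_smul_measure, integral_smul_measure, integral_dirac, integral_dirac]
      have h1 : (((N : ℝ≥0∞) * ((N : ℝ≥0∞) - 1))⁻¹).toReal
          = 1 / ((N : ℝ) * ((N : ℝ) - 1)) := by
        rw [ENNReal.toReal_inv, ENNReal.toReal_mul, hsub, ENNReal.toReal_natCast,
          ENNReal.toReal_natCast, Nat.cast_sub (by omega), Nat.cast_one, one_div]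
      rw [h1]
      have : ((x j : ℝ) - x j) ^ 2 = 0 := by ring
      rw [this, smul_zero, zero_add, smul_eq_mul]
      ring
    rw [Finset.sum_congr rfl hterm, ← Finset.mul_sum]
end
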